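/- arXiv:2105.00452 — 12 statements merged into one kernel-verified Lean document; each statement's English description precedes it below -/
import Mathlib

section
/- For every n ∈ ℕ and every T ⊆ {0,1}^n, the winning set satisfies |W(T)| = |T|; that is, the winning set operation preserves the number of words of each length. -/
/-- Left derivative: `lderiv s T = {v | s :: v ∈ T}`. -/
def lderiv (s : Bool) (T : Set (List Bool)) : Set (List Bool) := {v | s :: v ∈ T}

/-- Winning-set membership. Turn orders are lists over `Bool` with
`false` = A (Alice) and `true` = B (Bob), so that `A < B`. -/
def winW : List Bool → Set (List Bool) → Prop
  | [], T => [] ∈ T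
  | (false :: v), T => winW v (lderiv false T) ∨ winW v (lderiv true T)
  | (true :: v), T => winW v (lderiv false T) ∧ winW v (lderiv true T)

/-- The winning set of a binary language. -/
def winningSet (T : Set (List Bool)) : Set (List Bool) := {w | winW w T}

lemma finLen (n : ℕ) : {l : List Bool | l.length = n}.Finite := by
  induction n with
  | zero =>
    apply Set.Finite.subset (Set.finite_singleton [])
    intro l hl; simp at hl ⊢; exact hl
  | succ n ih =>
    apply Set.Finite.subset ((ih.image (false :: ·)).union (ih.image (true :: ·)))
    intro l hl
    match l with
    | [] => simp at hl
    | b :: v =>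
      simp only [Set.mem_setOf_eq, List.length_cons, Nat.succ.injEq] at hl
      cases b
      · exact Or.inl ⟨v, hl, rfl⟩
      · exact Or.inr ⟨v, hl, rfl⟩

lemma winW_length : ∀ (w : List Bool) (n : ℕ) (T : Set (List Bool)),
    (∀ u ∈ T, u.length = n) → winW w T → w.length = n := by
  intro w
  induction w with
  | nil => intro n T hT h; exact (hT [] h).symm ▸ rfl
  | cons b v ih =>
    intro n T hT h
    match n with
    | 0 =>
      exfalso
      have hderiv : ∀ s, lderiv s T = (∅ : Set (List Bool)) := by
        intro s; ext u; simp only [lderiv, Set.mem_setOf_eq, Set.mem_empty_iff_false, iff_false]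
        intro hu; simpa using hT _ hu
      have hemp : ∀ (u : List Bool), ¬ winW u ∅ := by
        intro u
        induction u with
        | nil => simp [winW]
        | cons c u' ihu =>
          have : lderiv false (∅ : Set (List Bool)) = ∅ := by ext x; simp [lderiv]
          have h2 : lderiv true (∅ : Set (List Bool)) = ∅ := by ext x; simp [lderiv]
          cases c <;> simp [winW, this, h2, ihu]
      cases b <;> simp only [winW, hderiv] at h
      · exact h.elim (hemp v) (hemp v)
      · exact hemp v h.1
    | n + 1 =>
      have hd : ∀ s, ∀ u ∈ lderiv s T, u.length = n := by
        intro s u hu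
        have := hT _ hu
        simpa using this
      cases b <;> simp only [winW] at h
      · rcases h with h | h
        · simp [ih n _ (hd false) h]
        · simp [ih n _ (hd true) h]
      · simp [ih n _ (hd false) h.1]

lemma split_card (S : Set (List Bool)) (n : ℕ) (hS : ∀ u ∈ S, u.length = n + 1) :
    S.ncard = (lderiv false S).ncard + (lderiv true S).ncard := by
  have hdec : S = (false :: ·) '' (lderiv false S) ∪ (true :: ·) '' (lderiv true S) := by
    ext w
    constructor
    · intro hw
      match w with
      | [] => exact absurd (hS [] hw) (by simp)
      | b :: v => cases b
                  · exact Or.inl ⟨v, hw, rfl⟩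
                  · exact Or.inr ⟨v, hw, rfl⟩
    · rintro (⟨v, hv, rfl⟩ | ⟨v, hv, rfl⟩) <;> exact hv
  have hfin : ∀ s, (lderiv s S).Finite := by
    intro s
    apply (finLen n).subset
    intro u hu; simpa using hS _ hu
  have hinj : ∀ b : Bool, Function.Injective (b :: · : List Bool → List Bool) := by
    intro b x y h; simpa using h
  conv_lhs => rw [hdec]
  rw [Set.ncard_union_eq ?_ ((hfin false).image _) ((hfin true).image _),
      Set.ncard_image_of_injective _ (hinj false), Set.ncard_image_of_injective _ (hinj true)]
  rw [Set.disjoint_left]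
  rintro a ⟨v, _, rfl⟩ ⟨u, _, h⟩
  simp at h

/-- the winning set operation preserves cardinality. -/
theorem winningSet_card (n : ℕ) (T : Set (List Bool)) (hT : ∀ u ∈ T, u.length = n) :
    (winningSet T).ncard = T.ncard := by
  induction n generalizing T with
  | zero =>
    have : winningSet T = T := by
      ext w
      constructor
      · intro hw
        have hl : w.length = 0 := winW_length w 0 T hT hw
        have : w = [] := List.length_eq_zero_iff.mp hl
        subst this
        exact hw
      · intro hw
        have : w = [] := List.length_eq_zero_iff.mp (hT w hw)
        subst this
        exact hw
    rw [this]
  | succ n ih =>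
    set T0 := lderiv false T with hT0
    set T1 := lderiv true T with hT1
    have hd : ∀ s, ∀ u ∈ lderiv s T, u.length = n := by
      intro s u hu; simpa using hT _ hu
    have hW : ∀ s, ∀ u ∈ winningSet (lderiv s T), u.length = n := by
      intro s u hu; exact winW_length u n _ (hd s) hu
    have hfin : ∀ s, (winningSet (lderiv s T)).Finite := by
      intro s; apply (finLen n).subset; intro u hu; exact hW s u hu
    have hWd0 : lderiv false (winningSet T) = winningSet T0 ∪ winningSet T1 := by
      ext v; simp only [lderiv, winningSet, Set.mem_setOf_eq, Set.mem_union]; rfl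
    have hWd1 : lderiv true (winningSet T) = winningSet T0 ∩ winningSet T1 := by
      ext v; simp only [lderiv, winningSet, Set.mem_setOf_eq, Set.mem_inter_iff]; rfl
    have hWlen : ∀ u ∈ winningSet T, u.length = n + 1 :=
      fun u hu => winW_length u (n+1) T hT hu
    rw [split_card (winningSet T) n hWlen, split_card T n hT, hWd0, hWd1,
        Set.ncard_union_add_ncard_inter _ _ (hfin false) (hfin true),
        ih T0 (hd false), ih T1 (hd true)]
end

section
/- If L ⊆ {0,1}* is a regular language, then its winning set W(L) ⊆ {A,B}* is regular. -/
/-! Run the game on a DFA `M` for `L`: a turn order `w` wins from the state `q` iff `q` lies in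
the set obtained from the accepting states by applying, for the turns of `w` from last to first, the
one-round predecessor operator `winStep` (existential on Alice's turns, universal on Bob's). Hence
`W(L) = {w | start ∈ w.foldr winStep accept}` is computed by a right fold over the finite type
`Set σ`, and such a language is the reversal of the language of a DFA with that state space. -/

namespace Language

variable {α β : Type*} [Finite β]

theorem isRegular_setOf_foldl (f : β → α → β) (b : β) (P : Set β) :
    IsRegular (T := α) {w | w.foldl f b ∈ P} :=
  isRegular_iff.mpr ⟨β, Fintype.ofFinite β, ⟨f, b, P⟩, rfl⟩

theorem isRegular_setOf_foldr (f : α → β → β) (b : β) (P : Set β) :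
    IsRegular (T := α) {w | w.foldr f b ∈ P} := by
  refine .of_reverse ?_
  have h : reverse {w : List α | w.foldr f b ∈ P} =
      {w : List α | w.foldl (fun c a => f a c) b ∈ P} := by
    ext w
    exact Iff.of_eq (congrArg (· ∈ P) (List.foldr_reverse ..))
  exact h ▸ isRegular_setOf_foldl _ b P

end Language

namespace DFA

variable {σ : Type*} (M : DFA Bool σ)

def winStep : Bool → Set σ → Set σ
  | false, S => {q | M.step q false ∈ S ∨ M.step q true ∈ S}
  | true, S => {q | M.step q false ∈ S ∧ M.step q true ∈ S}

theorem lderiv_acceptsFrom (b : Bool) (q : σ) :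
    lderiv b (M.acceptsFrom q) = M.acceptsFrom (M.step q b) :=
  rfl

theorem winW_acceptsFrom_iff (w : List Bool) (q : σ) :
    winW w (M.acceptsFrom q) ↔ q ∈ w.foldr M.winStep M.accept := by
  induction w generalizing q with
  | nil => exact Iff.rfl
  | cons a v ih =>
    cases a <;> simp only [winW, lderiv_acceptsFrom, ih, List.foldr_cons, winStep,
      Set.mem_ofPred_eq]

end DFA

/-- the winning set of a regular language is regular. -/
theorem winningSet_regular (L : Language Bool) (hL : L.IsRegular) :
    Language.IsRegular (winningSet L : Language Bool) := by
  obtain ⟨σ, _, M, rfl⟩ := hL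
  have hW : (winningSet M.accepts : Language Bool) =
      {w | w.foldr M.winStep M.accept ∈ {S | M.start ∈ S}} :=
    Set.ext fun w => M.winW_acceptsFrom_iff w M.start
  rw [hW]
  exact Language.isRegular_setOf_foldr _ _ _
end

section
/- Let A be a binary DFA with state set Q and let the winning-set NFA A' on state set 2^Q be defined from it. Then for every S ⊆ Q and every w ∈ {A,B}*, w is accepted from state S in A' if and only if w ∈ W(L_q(A)) for every q ∈ S. In particular, L(A') = W(L(A)). -/
variable {Q : Type*}

/-- `A`-transition of the winning-set NFA: each state of `S` evolves by an
independently chosen letter. -/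
def stepA (M : DFA Bool Q) (S : Set Q) : Set (Set Q) :=
  { T | ∃ f : Q → Bool, T = (fun q => M.step q (f q)) '' S }

/-- `B`-transition of the winning-set NFA: all states evolve by both letters. -/
def stepB (M : DFA Bool Q) (S : Set Q) : Set (Set Q) :=
  { T | T = {p | ∃ q ∈ S, ∃ b : Bool, p = M.step q b} }

/-- Transition function of the determinized winning-set automaton `W(A)`
on game states, with `false` = A and `true` = B. -/
def gsStep (M : DFA Bool Q) (G : Set (Set Q)) (c : Bool) : Set (Set Q) :=
  ⋃ S ∈ G, (if c then stepB M S else stepA M S)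

/-- Iterated transition function `δ_W` of `W(A)` on words. -/
def gsRun (M : DFA Bool Q) (G : Set (Set Q)) (w : List Bool) : Set (Set Q) :=
  w.foldl (gsStep M) G

/-- A game state is accepting iff some of its sets consists of final states. -/
def gsAccept (M : DFA Bool Q) (G : Set (Set Q)) : Prop :=
  ∃ S ∈ G, S ⊆ M.accept

set_option maxRecDepth 4000 in
lemma gsRun_biUnion (M : DFA Bool Q) (w : List Bool) :
    ∀ G : Set (Set Q), gsRun M G w = ⋃ S ∈ G, gsRun M {S} w := by
  induction w with
  | nil => intro G; simp [gsRun]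
  | cons c v ih =>
    intro G
    have h : gsRun M G (c :: v) = gsRun M (gsStep M G c) v := rfl
    have h3 : gsStep M G c = ⋃ S ∈ G, gsStep M {S} c := by
      simp [gsStep]
    calc gsRun M G (c :: v) = gsRun M (gsStep M G c) v := rfl
      _ = ⋃ T ∈ gsStep M G c, gsRun M {T} v := ih _
      _ = ⋃ S ∈ G, ⋃ T ∈ gsStep M {S} c, gsRun M {T} v := by
          rw [h3, Set.biUnion_iUnion]
          exact Set.iUnion_congr fun S => Set.biUnion_iUnion _ _
      _ = ⋃ S ∈ G, gsRun M {S} (c :: v) :=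
          Set.iUnion_congr fun S => Set.iUnion_congr fun _ => (ih (gsStep M {S} c)).symm

lemma gsAccept_iff (M : DFA Bool Q) (G : Set (Set Q)) (w : List Bool) :
    gsAccept M (gsRun M G w) ↔ ∃ S ∈ G, gsAccept M (gsRun M {S} w) := by
  rw [gsRun_biUnion]
  simp [gsAccept, Set.mem_iUnion]
  tauto

lemma main_lemma (M : DFA Bool Q) : ∀ (w : List Bool) (S : Set Q),
    gsAccept M (gsRun M {S} w) ↔ ∀ q ∈ S, winW w {x | M.evalFrom q x ∈ M.accept} := by
  intro w
  induction w with
  | nil =>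
    intro S
    simp [gsRun, gsAccept, winW, Set.subset_def, DFA.evalFrom]
  | cons c v ih =>
    intro S
    have h : gsRun M {S} (c :: v) = gsRun M (gsStep M {S} c) v := rfl
    rw [h, gsAccept_iff]
    have hld : ∀ (q : Q) (b : Bool),
        lderiv b {x | M.evalFrom q x ∈ M.accept} = {x | M.evalFrom (M.step q b) x ∈ M.accept} :=
      fun q b => rfl
    cases c
    · -- A move
      have hs : gsStep M {S} false = stepA M S := by simp [gsStep]
      rw [hs]
      constructor
      · rintro ⟨T, ⟨f, rfl⟩, hT⟩ q hq
        rw [ih] at hT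
        have := hT _ (Set.mem_image_of_mem _ hq)
        show winW v _ ∨ winW v _
        rw [hld, hld]
        cases hf : f q with
        | false => left; rw [← hf]; exact this
        | true => right; rw [← hf]; exact this
      · intro hq
        classical
        refine ⟨(fun q => M.step q (if winW v {x | M.evalFrom (M.step q true) x ∈ M.accept} then true else false)) '' S, ⟨_, rfl⟩, ?_⟩
        rw [ih]
        rintro p ⟨q, hqS, rfl⟩
        have this' : winW v (lderiv false {x | M.evalFrom q x ∈ M.accept}) ∨
            winW v (lderiv true {x | M.evalFrom q x ∈ M.accept}) := hq q hqS
        rw [hld, hld] at this'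
        by_cases hw : winW v {x | M.evalFrom (M.step q true) x ∈ M.accept}
        · simp only [if_pos hw]
          exact hw
        · simp only [if_neg hw]
          rcases this' with h1 | h1
          · exact h1
          · exact absurd h1 hw
    · -- B move
      have hs : gsStep M {S} true = stepB M S := by simp [gsStep]
      rw [hs]
      have hstepB : stepB M S = {{p | ∃ q ∈ S, ∃ b : Bool, p = M.step q b}} := by
        ext T; simp [stepB]
      rw [hstepB]
      constructor
      · rintro ⟨T, hT, hacc⟩ q hq
        simp only [Set.mem_singleton_iff] at hT
        subst hT
        rw [ih] at hacc
        show winW v _ ∧ winW v _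
        rw [hld, hld]
        exact ⟨hacc _ ⟨q, hq, false, rfl⟩, hacc _ ⟨q, hq, true, rfl⟩⟩
      · intro hq
        refine ⟨_, rfl, ?_⟩
        rw [ih]
        rintro p ⟨q, hqS, b, rfl⟩
        have := hq q hqS
        rw [show winW (true :: v) _ = _ from rfl] at this
        obtain ⟨h1, h2⟩ := this
        rw [hld] at h1; rw [hld] at h2
        cases b
        · exact h1
        · exact h2

/-- the canonical NFA `A'` accepts `w` from state `S` iff
`w ∈ W(L_q(A))` for every `q ∈ S`; in particular `L(A') = W(L(A))`. -/
theorem nfa_accepts_iff_winningSet (M : DFA Bool Q) :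
    (∀ (S : Set Q) (w : List Bool),
      gsAccept M (gsRun M {S} w) ↔
        ∀ q ∈ S, w ∈ winningSet {x : List Bool | M.evalFrom q x ∈ M.accept}) ∧
    (∀ w : List Bool,
      gsAccept M (gsRun M {{M.start}} w) ↔ w ∈ winningSet M.accepts) := by
  refine ⟨fun S w => main_lemma M w S, fun w => ?_⟩
  rw [main_lemma M w {M.start}]
  constructor
  · intro h; exact h _ rfl
  · intro h q hq; rw [hq]; exact h
end

section
/- In the determinized winning set automaton W(A), supersets can be removed from game states without changing the accepted language: if S, R ∈ G with S ⊊ R, then the game states G and G \ {R} are equivalent, i.e., for all words w over {A,B}, δ_W(G, w) is accepting iff δ_W(G \ {R}, w) is accepting. -/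
variable {Q : Type*}

/-! Call `G'` a refinement of `G` when every set of `G` contains a set of `G'`. Both transitions
map subsets to subsets, so refinement survives every run, and an accepting set of `G` yields an
accepting subset in `G'`. Since `S ⊂ R`, the game states `G` and `G \ {R}` refine each other. -/

def GsRefines (G' G : Set (Set Q)) : Prop :=
  ∀ T ∈ G, ∃ T' ∈ G', T' ⊆ T

theorem gsRefines_of_subset {G' G : Set (Set Q)} (h : G ⊆ G') : GsRefines G' G :=
  fun T hT => ⟨T, h hT, subset_rfl⟩

theorem exists_mem_stepA_subset (M : DFA Bool Q) {S R T : Set Q} (hSR : S ⊆ R)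
    (hT : T ∈ stepA M R) : ∃ T' ∈ stepA M S, T' ⊆ T := by
  obtain ⟨f, rfl⟩ := hT
  exact ⟨_, ⟨f, rfl⟩, Set.image_mono hSR⟩

theorem exists_mem_stepB_subset (M : DFA Bool Q) {S R T : Set Q} (hSR : S ⊆ R)
    (hT : T ∈ stepB M R) : ∃ T' ∈ stepB M S, T' ⊆ T := by
  subst hT
  exact ⟨_, rfl, fun _ ⟨q, hq, b, hp⟩ => ⟨q, hSR hq, b, hp⟩⟩

theorem GsRefines.gsStep (M : DFA Bool Q) {G' G : Set (Set Q)} (h : GsRefines G' G)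
    (c : Bool) : GsRefines (gsStep M G' c) (gsStep M G c) := by
  intro T hT
  simp only [_root_.gsStep, Set.mem_iUnion₂] at hT ⊢
  obtain ⟨R, hR, hTR⟩ := hT
  obtain ⟨S, hS, hSR⟩ := h R hR
  obtain ⟨T', hT', hT'T⟩ : ∃ T' ∈ (if c then stepB M S else stepA M S), T' ⊆ T := by
    cases c
    · exact exists_mem_stepA_subset M hSR hTR
    · exact exists_mem_stepB_subset M hSR hTR
  exact ⟨T', ⟨S, hS, hT'⟩, hT'T⟩

theorem GsRefines.gsRun (M : DFA Bool Q) {G' G : Set (Set Q)} (h : GsRefines G' G)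
    (w : List Bool) : GsRefines (gsRun M G' w) (gsRun M G w) := by
  induction w generalizing G' G with
  | nil => exact h
  | cons c w ih => exact ih (h.gsStep M c)

theorem GsRefines.gsAccept (M : DFA Bool Q) {G' G : Set (Set Q)} (h : GsRefines G' G)
    (hG : gsAccept M G) : gsAccept M G' := by
  obtain ⟨T, hT, hTacc⟩ := hG
  obtain ⟨T', hT', hT'T⟩ := h T hT
  exact ⟨T', hT', hT'T.trans hTacc⟩

theorem gs_remove_superset_general (M : DFA Bool Q) (G : Set (Set Q)) (S R : Set Q)
    (hS : S ∈ G) (hSR : S ⊂ R) :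
    ∀ w : List Bool,
      gsAccept M (gsRun M G w) ↔ gsAccept M (gsRun M (G \ {R}) w) := by
  have removed_refines : GsRefines (G \ {R}) G := fun T hT => by
    by_cases hTR : T = R
    · exact ⟨S, ⟨hS, hSR.ne⟩, hTR ▸ hSR.subset⟩
    · exact ⟨T, ⟨hT, hTR⟩, subset_rfl⟩
  have refines_removed : GsRefines G (G \ {R}) := gsRefines_of_subset Set.sdiff_subset
  exact fun w => ⟨(removed_refines.gsRun M w).gsAccept M, (refines_removed.gsRun M w).gsAccept M⟩

/-- proper supersets can be removed from game states. -/
theorem gs_remove_superset (M : DFA Bool Q) (G : Set (Set Q)) (S R : Set Q)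
    (hS : S ∈ G) (hR : R ∈ G) (hSR : S ⊂ R) :
    ∀ w : List Bool,
      gsAccept M (gsRun M G w) ↔ gsAccept M (gsRun M (G \ {R}) w) :=
  gs_remove_superset_general M G S R hS hSR
end

section
/- In the determinized winning set automaton W(A), a set containing a state from which no final state is reachable can be removed: if S ∈ G and some q ∈ S has no path in A to a final state, then G and G \ {S} are equivalent game states. -/
variable {Q : Type*}

def Dead (M : DFA Bool Q) (q : Q) : Prop := ∀ v : List Bool, M.evalFrom q v ∉ M.accept

lemma dead_step (M : DFA Bool Q) {q : Q} (h : Dead M q) (b : Bool) :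
    Dead M (M.step q b) := by
  intro v hv
  exact h (b :: v) hv

def GSInv (M : DFA Bool Q) (G G' : Set (Set Q)) : Prop :=
  G' ⊆ G ∧ ∀ T ∈ G, T ∉ G' → ∃ q ∈ T, Dead M q

lemma inv_step (M : DFA Bool Q) {G G' : Set (Set Q)} (h : GSInv M G G') (c : Bool) :
    GSInv M (gsStep M G c) (gsStep M G' c) := by
  obtain ⟨hsub, hdead⟩ := h
  constructor
  · intro T hT
    simp only [gsStep, Set.mem_iUnion] at hT ⊢
    obtain ⟨S, hS, hTS⟩ := hT
    exact ⟨S, hsub hS, hTS⟩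
  · intro T hT hT'
    simp only [gsStep, Set.mem_iUnion] at hT hT'
    obtain ⟨S, hS, hTS⟩ := hT
    have hSnot : S ∉ G' := fun hS' => hT' ⟨S, hS', hTS⟩
    obtain ⟨p, hp, hpd⟩ := hdead S hS hSnot
    cases c with
    | false =>
      simp only [if_neg Bool.false_ne_true, stepA, Set.mem_setOf_eq] at hTS
      obtain ⟨f, rfl⟩ := hTS
      exact ⟨M.step p (f p), ⟨p, hp, rfl⟩, dead_step M hpd _⟩
    | true =>
      simp only [if_pos rfl, stepB, Set.mem_setOf_eq] at hTS
      subst hTS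
      exact ⟨M.step p false, ⟨p, hp, false, rfl⟩, dead_step M hpd _⟩

lemma inv_accept (M : DFA Bool Q) {G G' : Set (Set Q)} (h : GSInv M G G') :
    gsAccept M G ↔ gsAccept M G' := by
  obtain ⟨hsub, hdead⟩ := h
  constructor
  · rintro ⟨T, hT, hTa⟩
    by_cases hT' : T ∈ G'
    · exact ⟨T, hT', hTa⟩
    · obtain ⟨p, hp, hpd⟩ := hdead T hT hT'
      exact absurd (hTa hp) (hpd [])
  · rintro ⟨T, hT, hTa⟩
    exact ⟨T, hsub hT, hTa⟩

lemma inv_run (M : DFA Bool Q) {G G' : Set (Set Q)} (h : GSInv M G G') (w : List Bool) :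
    GSInv M (gsRun M G w) (gsRun M G' w) := by
  induction w generalizing G G' with
  | nil => exact h
  | cons c w ih => exact ih (inv_step M h c)

/-- a set containing a state from which no final state is
reachable can be removed from a game state. -/
theorem gs_remove_dead (M : DFA Bool Q) (G : Set (Set Q)) (S : Set Q) (q : Q)
    (hS : S ∈ G) (hq : q ∈ S) (hdead : ∀ v : List Bool, M.evalFrom q v ∉ M.accept) :
    ∀ w : List Bool,
      gsAccept M (gsRun M G w) ↔ gsAccept M (gsRun M (G \ {S}) w) := by
  intro w
  refine inv_accept M (inv_run M ⟨Set.diff_subset, ?_⟩ w)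
  intro T hT hT'
  have : T = S := by
    by_contra hne
    exact hT' ⟨hT, hne⟩
  exact ⟨q, this ▸ hq, hdead⟩
end

section
/- In the determinized winning set automaton W(A), an accepting sink state can be removed from a set: if S ∈ G and q ∈ S ∩ F is a sink state (δ(q,0) = δ(q,1) = q), then G is equivalent to (G \ {S}) ∪ {S \ {q}}. -/
variable {Q : Type*}

/-- Auxiliary relation: `T` equals `T'` or `T'` with the sink `q` added. -/
def SinkRel (q : Q) (T T' : Set Q) : Prop := T = T' ∨ T = T' ∪ {q}

/-- Mutual simulation between game states. -/
def GSinkRel (q : Q) (G G' : Set (Set Q)) : Prop :=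
  (∀ T ∈ G, ∃ T' ∈ G', SinkRel q T T') ∧ (∀ T' ∈ G', ∃ T ∈ G, SinkRel q T T')

lemma sinkRel_succ (M : DFA Bool Q) (q : Q)
    (hsink : ∀ b, M.step q b = q) {T T' : Set Q} (h : SinkRel q T T') (c : Bool) :
    (∀ U ∈ (if c then stepB M T else stepA M T),
        ∃ U' ∈ (if c then stepB M T' else stepA M T'), SinkRel q U U') ∧
    (∀ U' ∈ (if c then stepB M T' else stepA M T'),
        ∃ U ∈ (if c then stepB M T else stepA M T), SinkRel q U U') := by
  rcases h with rfl | rfl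
  · exact ⟨fun U hU => ⟨U, hU, Or.inl rfl⟩, fun U hU => ⟨U, hU, Or.inl rfl⟩⟩
  cases c
  · -- stepA
    simp only [if_neg Bool.false_ne_true, stepA, Set.mem_setOf_eq]
    constructor
    · rintro U ⟨f, rfl⟩
      refine ⟨(fun p => M.step p (f p)) '' T', ⟨f, rfl⟩, Or.inr ?_⟩
      rw [Set.image_union, Set.image_singleton, hsink (f q)]
    · rintro U' ⟨f, rfl⟩
      refine ⟨(fun p => M.step p (f p)) '' (T' ∪ {q}), ⟨f, rfl⟩, Or.inr ?_⟩
      rw [Set.image_union, Set.image_singleton, hsink (f q)]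
  · -- stepB
    simp only [if_pos, stepB, Set.mem_setOf_eq]
    have key : {p | ∃ r ∈ T' ∪ {q}, ∃ b : Bool, p = M.step r b} =
        {p | ∃ r ∈ T', ∃ b : Bool, p = M.step r b} ∪ {q} := by
      ext p
      simp only [Set.mem_union, Set.mem_setOf_eq, Set.mem_singleton_iff]
      constructor
      · rintro ⟨r, hr | hr, b, rfl⟩
        · exact Or.inl ⟨r, hr, b, rfl⟩
        · subst hr; exact Or.inr (hsink b)
      · rintro (⟨r, hr, b, rfl⟩ | hpq)
        · exact ⟨r, Or.inl hr, b, rfl⟩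
        · exact ⟨q, Or.inr rfl, false, by rw [hpq, hsink false]⟩
    constructor
    · rintro U rfl
      exact ⟨_, rfl, Or.inr key⟩
    · rintro U' rfl
      exact ⟨_, rfl, Or.inr key⟩

lemma gSinkRel_step (M : DFA Bool Q) (q : Q) (hsink : ∀ b, M.step q b = q)
    {G G' : Set (Set Q)} (h : GSinkRel q G G') (c : Bool) :
    GSinkRel q (gsStep M G c) (gsStep M G' c) := by
  obtain ⟨h1, h2⟩ := h
  constructor
  · intro U hU
    simp only [gsStep, Set.mem_iUnion] at hU ⊢
    obtain ⟨T, hT, hUT⟩ := hU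
    obtain ⟨T', hT', hrel⟩ := h1 T hT
    obtain ⟨U', hU', hrel'⟩ := (sinkRel_succ M q hsink hrel c).1 U hUT
    exact ⟨U', ⟨T', hT', hU'⟩, hrel'⟩
  · intro U' hU'
    simp only [gsStep, Set.mem_iUnion] at hU' ⊢
    obtain ⟨T', hT', hUT'⟩ := hU'
    obtain ⟨T, hT, hrel⟩ := h2 T' hT'
    obtain ⟨U, hU, hrel'⟩ := (sinkRel_succ M q hsink hrel c).2 U' hUT'
    exact ⟨U, ⟨T, hT, hU⟩, hrel'⟩

lemma gSinkRel_run (M : DFA Bool Q) (q : Q) (hsink : ∀ b, M.step q b = q)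
    {G G' : Set (Set Q)} (h : GSinkRel q G G') (w : List Bool) :
    GSinkRel q (gsRun M G w) (gsRun M G' w) := by
  induction w generalizing G G' with
  | nil => exact h
  | cons c w ih => exact ih (gSinkRel_step M q hsink h c)

/-- an accepting sink state can be removed from a set. -/
theorem gs_remove_accepting_sink (M : DFA Bool Q) (G : Set (Set Q)) (S : Set Q)
    (q : Q) (hS : S ∈ G) (hq : q ∈ S) (hacc : q ∈ M.accept)
    (hsink0 : M.step q false = q) (hsink1 : M.step q true = q) :
    ∀ w : List Bool,
      gsAccept M (gsRun M G w) ↔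
        gsAccept M (gsRun M ((G \ {S}) ∪ {S \ {q}}) w) := by
  intro w
  have hsink : ∀ b, M.step q b = q := by intro b; cases b <;> assumption
  have hinit : GSinkRel q G ((G \ {S}) ∪ {S \ {q}}) := by
    constructor
    · intro T hT
      by_cases hTS : T = S
      · refine ⟨S \ {q}, Or.inr rfl, Or.inr ?_⟩
        rw [hTS]
        ext p
        simp only [Set.mem_union, Set.mem_diff, Set.mem_singleton_iff]
        constructor
        · intro hp
          by_cases hpq : p = q
          · exact Or.inr hpq
          · exact Or.inl ⟨hp, hpq⟩
        · rintro (⟨hp, _⟩ | rfl)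
          · exact hp
          · exact hq
      · exact ⟨T, Or.inl ⟨hT, hTS⟩, Or.inl rfl⟩
    · rintro T' (⟨hT', _⟩ | hT')
      · exact ⟨T', hT', Or.inl rfl⟩
      · rw [Set.mem_singleton_iff] at hT'
        refine ⟨S, hS, Or.inr ?_⟩
        rw [hT']
        ext p
        simp only [Set.mem_union, Set.mem_diff, Set.mem_singleton_iff]
        constructor
        · intro hp
          by_cases hpq : p = q
          · exact Or.inr hpq
          · exact Or.inl ⟨hp, hpq⟩
        · rintro (⟨hp, _⟩ | rfl)
          · exact hp
          · exact hq
  obtain ⟨h1, h2⟩ := gSinkRel_run M q hsink hinit w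
  constructor
  · rintro ⟨T, hT, hTacc⟩
    obtain ⟨T', hT', hrel⟩ := h1 T hT
    refine ⟨T', hT', ?_⟩
    rcases hrel with rfl | rfl
    · exact hTacc
    · exact fun p hp => hTacc (Or.inl hp)
  · rintro ⟨T', hT', hTacc⟩
    obtain ⟨T, hT, hrel⟩ := h2 T' hT'
    refine ⟨T, hT, ?_⟩
    rcases hrel with rfl | rfl
    · exact hTacc
    · rintro p (hp | rfl)
      · exact hTacc hp
      · exact hacc
end

section
/- For any n-state binary DFA A, the minimal DFA recognizing the winning set W(L(A)) has at most D(n) states, where D(n) is the n-th Dedekind number (the number of antichains of subsets of an n-element set). -/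
/-- The `n`-th Dedekind number: the number of antichains of subsets of an
`n`-element set. -/
noncomputable def dedekind (n : ℕ) : ℕ :=
  Set.ncard {A : Finset (Finset (Fin n)) |
    IsAntichain (· ⊆ ·) (A : Set (Finset (Fin n)))}

namespace WSAux

open Classical

variable {n : ℕ}

/-- Minimal true sets of a predicate on `Finset (Fin n)`. -/
noncomputable def mins (f : Finset (Fin n) → Prop) : Finset (Finset (Fin n)) :=
  Finset.univ.filter fun S => f S ∧ ∀ T ⊂ S, ¬ f T

theorem mem_mins {f : Finset (Fin n) → Prop} {S : Finset (Fin n)} :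
    S ∈ mins f ↔ f S ∧ ∀ T ⊂ S, ¬ f T := by
  simp [mins]

theorem mins_antichain (f : Finset (Fin n) → Prop) :
    IsAntichain (· ⊆ ·) ((mins f : Finset (Finset (Fin n))) : Set (Finset (Fin n))) := by
  intro S hS T hT hne hsub
  rw [Finset.mem_coe, mem_mins] at hS hT
  exact hT.2 S (Finset.ssubset_iff_subset_ne.2 ⟨hsub, hne⟩) hS.1

theorem exists_mins_le {f : Finset (Fin n) → Prop} :
    ∀ S : Finset (Fin n), f S → ∃ m ∈ mins f, m ⊆ S := by
  intro S
  induction S using Finset.strongInduction with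
  | _ S ih =>
    intro hS
    by_cases h : ∀ T ⊂ S, ¬ f T
    · exact ⟨S, mem_mins.2 ⟨hS, h⟩, subset_rfl⟩
    · push_neg at h
      obtain ⟨T, hTS, hfT⟩ := h
      obtain ⟨m, hm, hmT⟩ := ih T hTS hfT
      exact ⟨m, hm, hmT.trans hTS.subset⟩

theorem eval_mins {f : Finset (Fin n) → Prop}
    (hf : ∀ ⦃S T : Finset (Fin n)⦄, S ⊆ T → f S → f T) (S : Finset (Fin n)) :
    (∃ m ∈ mins f, m ⊆ S) ↔ f S := by
  constructor
  · rintro ⟨m, hm, hms⟩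
    exact hf hms (mem_mins.1 hm).1
  · exact exists_mins_le S

variable {Q : Type} [Fintype Q]

/-- Boolean combination: `true` = conjunction (Bob), `false` = disjunction (Alice). -/
def bop (b : Bool) (P R : Prop) : Prop := if b then P ∧ R else P ∨ R

theorem bop_mono {b : Bool} {P P' R R' : Prop} (h1 : P → P') (h2 : R → R') :
    bop b P R → bop b P' R' := by
  cases b <;> simp only [bop, if_true, if_false, Bool.false_eq_true, Bool.true_eq_false] <;> tauto

theorem bop_congr {b : Bool} {P P' R R' : Prop} (h1 : P ↔ P') (h2 : R ↔ R') :
    bop b P R ↔ bop b P' R' := by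
  cases b <;> simp only [bop, if_true, if_false, Bool.false_eq_true, Bool.true_eq_false] <;> rw [h1, h2]

/-- The "game value" function: `Wf M u q h` is the value of the game with turn
order `u`, current DFA state `q`, and payoff `h` at the end. -/
def Wf (M : DFA Bool Q) : List Bool → Q → (Q → Prop) → Prop
  | [], q, h => h q
  | b :: u, q, h => bop b (Wf M u (M.step q false) h) (Wf M u (M.step q true) h)

theorem Wf_snoc (M : DFA Bool Q) (b : Bool) :
    ∀ (u : List Bool) (q : Q) (h : Q → Prop),
      Wf M (u ++ [b]) q h ↔
        Wf M u q (fun p => bop b (h (M.step p false)) (h (M.step p true))) := by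
  intro u
  induction u with
  | nil => intro q h; rfl
  | cons c u ih =>
    intro q h
    simp only [List.cons_append, Wf]
    exact bop_congr (ih _ _) (ih _ _)

theorem winW_iff (M : DFA Bool Q) :
    ∀ (u : List Bool) (q : Q),
      winW u {v | M.evalFrom q v ∈ M.accept} ↔ Wf M u q (· ∈ M.accept) := by
  intro u
  induction u with
  | nil => intro q; simp [winW, Wf, DFA.evalFrom]
  | cons b u ih =>
    intro q
    have hld : ∀ c : Bool, lderiv c {v | M.evalFrom q v ∈ M.accept} =
        {v | M.evalFrom (M.step q c) v ∈ M.accept} := fun c => rfl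
    cases b <;>
      simp only [winW, hld, Wf, bop, if_true, if_false, Bool.false_eq_true,
        Bool.true_eq_false] <;>
      rw [ih, ih]

/-- Encode a predicate on `Q` as a finset of `Fin n` via an equivalence. -/
noncomputable def sets (e : Q ≃ Fin n) (h : Q → Prop) : Finset (Fin n) :=
  Finset.univ.filter fun i => h (e.symm i)

theorem subset_sets (e : Q ≃ Fin n) (h : Q → Prop) (m : Finset (Fin n)) :
    m ⊆ sets e h ↔ ∀ i ∈ m, h (e.symm i) := by
  simp [Finset.subset_iff, sets]

theorem mem_sets (e : Q ≃ Fin n) (h : Q → Prop) (i : Fin n) :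
    i ∈ sets e h ↔ h (e.symm i) := by
  simp [sets]

/-- The monotone predicate defining the transition of the winning-set DFA. -/
def fstep (M : DFA Bool Q) (e : Q ≃ Fin n) (A : Finset (Finset (Fin n))) (b : Bool)
    (S : Finset (Fin n)) : Prop :=
  ∃ m ∈ A, ∀ i ∈ m,
    bop b (e (M.step (e.symm i) false) ∈ S) (e (M.step (e.symm i) true) ∈ S)

theorem fstep_mono (M : DFA Bool Q) (e : Q ≃ Fin n) (A : Finset (Finset (Fin n))) (b : Bool) :
    ∀ ⦃S T : Finset (Fin n)⦄, S ⊆ T → fstep M e A b S → fstep M e A b T := by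
  rintro S T hST ⟨m, hm, hall⟩
  exact ⟨m, hm, fun i hi => bop_mono (fun h => hST h) (fun h => hST h) (hall i hi)⟩

/-- The state space: antichains of subsets of `Fin n`. -/
abbrev WSt (n : ℕ) :=
  {A : Finset (Finset (Fin n)) // IsAntichain (· ⊆ ·) (A : Set (Finset (Fin n)))}

noncomputable instance : Fintype (WSt n) := Fintype.ofFinite _

/-- The winning-set DFA. -/
noncomputable def WDFA (M : DFA Bool Q) (e : Q ≃ Fin n) : DFA Bool (WSt n) where
  step A b := ⟨mins (fstep M e A.1 b), mins_antichain _⟩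
  start := ⟨mins (fun S => e M.start ∈ S), mins_antichain _⟩
  accept := {A | ∃ m ∈ A.1, ∀ i ∈ m, e.symm i ∈ M.accept}

theorem key (e : Q ≃ Fin n) (f : Finset (Fin n) → Prop)
    (hf : ∀ ⦃S T : Finset (Fin n)⦄, S ⊆ T → f S → f T) (h : Q → Prop) :
    (∃ m ∈ mins f, ∀ i ∈ m, h (e.symm i)) ↔ f (sets e h) := by
  rw [← eval_mins hf (sets e h)]
  simp_rw [subset_sets]

theorem eval_WDFA (M : DFA Bool Q) (e : Q ≃ Fin n) :
    ∀ (u : List Bool) (h : Q → Prop),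
      (∃ m ∈ ((WDFA M e).eval u).1, ∀ i ∈ m, h (e.symm i)) ↔ Wf M u M.start h := by
  intro u
  induction u using List.reverseRecOn with
  | nil =>
    intro h
    have h0 : (WDFA M e).eval [] = (WDFA M e).start := rfl
    rw [h0]
    show (∃ m ∈ mins (fun S => e M.start ∈ S), ∀ i ∈ m, h (e.symm i)) ↔ Wf M [] M.start h
    rw [key e _ (fun S T hST hs => hST hs) h]
    simp [mem_sets, Wf]
  | append_singleton u b ih =>
    intro h
    have h1 : (WDFA M e).eval (u ++ [b]) = (WDFA M e).step ((WDFA M e).eval u) b := by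
      simp [DFA.eval, DFA.evalFrom]
    rw [h1]
    show (∃ m ∈ mins (fstep M e ((WDFA M e).eval u).1 b), ∀ i ∈ m, h (e.symm i)) ↔ _
    rw [key e _ (fstep_mono M e _ b) h]
    have h2 : fstep M e ((WDFA M e).eval u).1 b (sets e h) ↔
        (∃ m ∈ ((WDFA M e).eval u).1, ∀ i ∈ m,
          bop b (h (M.step (e.symm i) false)) (h (M.step (e.symm i) true))) := by
      unfold fstep
      refine exists_congr fun m => and_congr_right fun _ => forall₂_congr fun i _ => ?_
      exact bop_congr (by rw [mem_sets, Equiv.symm_apply_apply])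
        (by rw [mem_sets, Equiv.symm_apply_apply])
    rw [h2, Wf_snoc]
    exact ih fun p => bop b (h (M.step p false)) (h (M.step p true))

end WSAux

/-- the minimal DFA of the winning set of the language of an
`n`-state binary DFA has at most `D(n)` states. -/
theorem winningSet_state_complexity_le_dedekind
    {Q : Type} [Fintype Q] (M : DFA Bool Q) :
    ∃ (σ : Type) (_ : Fintype σ) (N : DFA Bool σ),
      N.accepts = winningSet M.accepts ∧
      Fintype.card σ ≤ dedekind (Fintype.card Q) := by
  classical
  set n := Fintype.card Q with hn
  let e : Q ≃ Fin n := Fintype.equivFin Q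
  refine ⟨WSAux.WSt n, inferInstance, WSAux.WDFA M e, ?_, ?_⟩
  · ext w
    rw [DFA.mem_accepts]
    show (∃ m ∈ ((WSAux.WDFA M e).eval w).1, ∀ i ∈ m, e.symm i ∈ M.accept) ↔ _
    rw [WSAux.eval_WDFA, ← WSAux.winW_iff]
    have hacc : {v | M.evalFrom M.start v ∈ M.accept} = M.accepts := by
      ext x
      exact (DFA.mem_accepts M).symm
    rw [hacc]
    rfl
  · have : dedekind n = Fintype.card (WSAux.WSt n) := by
      unfold dedekind
      rw [← Nat.card_coe_set_eq, Nat.card_eq_fintype_card]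
      exact Fintype.card_congr (Equiv.subtypeEquivRight fun _ => Iff.rfl)
    rw [this]
end

section
/- For every turn order word w over {A,B}: Alice has a winning strategy for the Dyck target language on w with w of the form A^{2i} B^{2j} A^{2k} if and only if i ≥ j and k ≥ 2j. That is, W(D) ∩ (AA)*(BB)*(AA)* = { A^{2i} B^{2j} A^{2k} : i ≥ j, k ≥ 2j }. -/
/-- The Dyck language of balanced parentheses (`false` = open, `true` = close). -/
def IsDyck (v : List Bool) : Prop :=
  v.count false = v.count true ∧ ∀ p : List Bool, p <+: v → p.count true ≤ p.count false

/-- Dyck from height `h`. -/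
def Dy (h : ℕ) : Set (List Bool) :=
  {v | h + v.count false = v.count true ∧
       ∀ p : List Bool, p <+: v → p.count true ≤ h + p.count false}

lemma dyck_eq_Dy : {v : List Bool | IsDyck v} = Dy 0 := by
  ext v; simp [IsDyck, Dy]

lemma lderiv_empty (s : Bool) : lderiv s (∅ : Set (List Bool)) = ∅ := by
  ext v; simp [lderiv]

lemma not_winW_empty (w : List Bool) : ¬ winW w (∅ : Set (List Bool)) := by
  induction w with
  | nil => simp [winW]
  | cons b v ih =>
    cases b
    · intro h; rw [winW, lderiv_empty, lderiv_empty] at h; exact h.elim ih ih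
    · intro h; rw [winW, lderiv_empty, lderiv_empty] at h; exact ih h.1

lemma lderiv_false_Dy (h : ℕ) : lderiv false (Dy h) = Dy (h + 1) := by
  ext v
  constructor
  · rintro ⟨hc, hp⟩
    refine ⟨by simp [List.count_cons] at hc; omega, fun p hpre => ?_⟩
    have := hp (false :: p) (by simpa using hpre)
    simp [List.count_cons] at this; omega
  · rintro ⟨hc, hp⟩
    refine ⟨by simp [List.count_cons]; omega, fun p hpre => ?_⟩
    rcases p with _ | ⟨b, q⟩
    · simp
    · rw [List.cons_prefix_cons] at hpre
      obtain ⟨rfl, hq⟩ := hpre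
      have := hp q hq
      simp [List.count_cons]; omega

lemma lderiv_true_Dy (h : ℕ) : lderiv true (Dy (h + 1)) = Dy h := by
  ext v
  constructor
  · rintro ⟨hc, hp⟩
    refine ⟨by simp [List.count_cons] at hc; omega, fun p hpre => ?_⟩
    have := hp (true :: p) (by simpa using hpre)
    simp [List.count_cons] at this; omega
  · rintro ⟨hc, hp⟩
    refine ⟨by simp [List.count_cons]; omega, fun p hpre => ?_⟩
    rcases p with _ | ⟨b, q⟩
    · simp
    · rw [List.cons_prefix_cons] at hpre
      obtain ⟨rfl, hq⟩ := hpre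
      have := hp q hq
      simp [List.count_cons]; omega

lemma lderiv_true_Dy0 : lderiv true (Dy 0) = ∅ := by
  ext v
  simp only [lderiv, Set.mem_empty_iff_false, iff_false, Set.mem_setOf_eq]
  rintro ⟨hc, hp⟩
  have := hp [true] ⟨v, rfl⟩
  simp at this

lemma winA (n h : ℕ) : winW (List.replicate n false) (Dy h) ↔ h ≤ n ∧ n % 2 = h % 2 := by
  induction n generalizing h with
  | zero =>
    simp only [List.replicate_zero]
    show [] ∈ Dy h ↔ _
    constructor
    · rintro ⟨hc, -⟩; simp at hc; omega
    · rintro ⟨h1, h2⟩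
      refine ⟨by simp; omega, fun p hp => ?_⟩
      rw [List.prefix_nil.mp hp]; simp
  | succ n ih =>
    rw [List.replicate_succ]
    show winW _ (lderiv false (Dy h)) ∨ winW _ (lderiv true (Dy h)) ↔ _
    rw [lderiv_false_Dy]
    cases h with
    | zero =>
      rw [lderiv_true_Dy0, ih]
      have := not_winW_empty (List.replicate n false)
      constructor
      · rintro (⟨h1, h2⟩ | hw)
        · omega
        · exact absurd hw this
      · rintro ⟨h1, h2⟩; left; omega
    | succ m =>
      rw [lderiv_true_Dy, ih, ih]
      omega

lemma winB (m n h : ℕ) :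
    winW (List.replicate m true ++ List.replicate n false) (Dy h) ↔
      m ≤ h ∧ h + m ≤ n ∧ (h + m) % 2 = n % 2 := by
  induction m generalizing h with
  | zero => rw [List.replicate_zero, List.nil_append, winA]; omega
  | succ m ih =>
    rw [List.replicate_succ, List.cons_append]
    show winW _ (lderiv false (Dy h)) ∧ winW _ (lderiv true (Dy h)) ↔ _
    rw [lderiv_false_Dy]
    cases h with
    | zero =>
      rw [lderiv_true_Dy0]
      have := not_winW_empty (List.replicate m true ++ List.replicate n false)
      constructor
      · rintro ⟨-, hw⟩; exact absurd hw this
      · rintro ⟨h1, -⟩; omega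
    | succ p =>
      rw [lderiv_true_Dy, ih, ih]
      omega

lemma winC (a : ℕ) (w : List Bool) (h : ℕ) :
    winW (List.replicate a false ++ w) (Dy h) ↔
      ∃ h', h ≤ h' + a ∧ h' ≤ h + a ∧ (h' + h + a) % 2 = 0 ∧ winW w (Dy h') := by
  induction a generalizing h with
  | zero =>
    rw [List.replicate_zero, List.nil_append]
    constructor
    · intro hw; exact ⟨h, by omega, by omega, by omega, hw⟩
    · rintro ⟨h', c1, c2, c3, hw⟩
      have : h' = h := by omega
      rwa [this] at hw
  | succ a ih =>
    rw [List.replicate_succ, List.cons_append]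
    show winW _ (lderiv false (Dy h)) ∨ winW _ (lderiv true (Dy h)) ↔ _
    rw [lderiv_false_Dy]
    cases h with
    | zero =>
      rw [lderiv_true_Dy0, ih]
      have := not_winW_empty (List.replicate a false ++ w)
      constructor
      · rintro (⟨h', c1, c2, c3, hw⟩ | hw)
        · exact ⟨h', by omega, by omega, by omega, hw⟩
        · exact absurd hw this
      · rintro ⟨h', c1, c2, c3, hw⟩
        left; exact ⟨h', by omega, by omega, by omega, hw⟩
    | succ p =>
      rw [lderiv_true_Dy, ih, ih]
      constructor
      · rintro (⟨h', c1, c2, c3, hw⟩ | ⟨h', c1, c2, c3, hw⟩)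
        · exact ⟨h', by omega, by omega, by omega, hw⟩
        · exact ⟨h', by omega, by omega, by omega, hw⟩
      · rintro ⟨h', c1, c2, c3, hw⟩
        rcases le_or_gt (p + 2) (h' + a) with hc | hc
        · left; exact ⟨h', by omega, by omega, by omega, hw⟩
        · right; exact ⟨h', by omega, by omega, by omega, hw⟩

lemma key (i j k : ℕ) :
    winW (List.replicate (2*i) false ++ List.replicate (2*j) true ++
      List.replicate (2*k) false) (Dy 0) ↔ j ≤ i ∧ 2*j ≤ k := by
  rw [List.append_assoc, winC]
  constructor
  · rintro ⟨h', c1, c2, c3, hw⟩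
    rw [winB] at hw
    omega
  · rintro ⟨h1, h2⟩
    exact ⟨2*j, by omega, by omega, by omega, by rw [winB]; omega⟩

/-- `W(D) ∩ (AA)*(BB)*(AA)* = {A^{2i} B^{2j} A^{2k} : i ≥ j, k ≥ 2j}`
(with `A` = `false`, `B` = `true`). -/
theorem winningSet_dyck_inter :
    winningSet {v : List Bool | IsDyck v} ∩
      {w : List Bool | ∃ i j k : ℕ,
        w = List.replicate (2*i) false ++ List.replicate (2*j) true ++
            List.replicate (2*k) false} =
    {w : List Bool | ∃ i j k : ℕ,
        w = List.replicate (2*i) false ++ List.replicate (2*j) true ++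
            List.replicate (2*k) false ∧ j ≤ i ∧ 2*j ≤ k} := by
  ext w
  simp only [Set.mem_inter_iff, Set.mem_setOf_eq, winningSet, dyck_eq_Dy]
  constructor
  · rintro ⟨hw, i, j, k, rfl⟩
    obtain ⟨h1, h2⟩ := (key i j k).mp hw
    exact ⟨i, j, k, rfl, h1, h2⟩
  · rintro ⟨i, j, k, rfl, h1, h2⟩
    exact ⟨(key i j k).mpr ⟨h1, h2⟩, i, j, k, rfl⟩
end

section
/- The winning set W(D) of the Dyck language D is not context-free. -/
namespace ContextFreeGrammar

variable {T : Type*} {g : ContextFreeGrammar T}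

inductive ParseForest (g : ContextFreeGrammar T) : ℕ → List (Symbol T g.NT) → List T → Prop
  | nil : g.ParseForest 0 [] []
  | terminal {n : ℕ} {s : List (Symbol T g.NT)} {w : List T} (a : T) :
      g.ParseForest n s w → g.ParseForest n (.terminal a :: s) (a :: w)
  | nonterminal {m n : ℕ} {s : List (Symbol T g.NT)} {u w : List T}
      {r : ContextFreeRule T g.NT} (hr : r ∈ g.rules) :
      g.ParseForest m r.output u → g.ParseForest n s w →
      g.ParseForest (m + n + 1) (.nonterminal r.input :: s) (u ++ w)

namespace ParseForest

theorem append {n₁ n₂ : ℕ} {s₁ s₂ : List (Symbol T g.NT)} {w₁ w₂ : List T}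
    (h₁ : g.ParseForest n₁ s₁ w₁) (h₂ : g.ParseForest n₂ s₂ w₂) :
    g.ParseForest (n₁ + n₂) (s₁ ++ s₂) (w₁ ++ w₂) := by
  induction h₁ with
  | nil => simpa using h₂
  | terminal a _ ih => exact ih.terminal a
  | @nonterminal m n s u w r hr ho _ _ ih =>
    rw [show m + n + 1 + n₂ = m + (n + n₂) + 1 by omega, List.append_assoc]
    exact nonterminal hr ho ih

theorem eq_nil {n : ℕ} {w : List T} (h : g.ParseForest n [] w) : n = 0 ∧ w = [] := by
  cases h; exact ⟨rfl, rfl⟩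

theorem split {s₁ s₂ : List (Symbol T g.NT)} {n : ℕ} {w : List T}
    (h : g.ParseForest n (s₁ ++ s₂) w) : ∃ n₁ n₂ w₁ w₂, n = n₁ + n₂ ∧ w = w₁ ++ w₂ ∧
      g.ParseForest n₁ s₁ w₁ ∧ g.ParseForest n₂ s₂ w₂ := by
  induction s₁ generalizing n w with
  | nil => exact ⟨0, n, [], w, by omega, rfl, nil, h⟩
  | cons e s ih =>
    cases h with
    | terminal a h =>
      obtain ⟨n₁, n₂, w₁, w₂, rfl, rfl, h₁, h₂⟩ := ih h
      exact ⟨n₁, n₂, a :: w₁, w₂, rfl, rfl, h₁.terminal a, h₂⟩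
    | nonterminal hr ho h =>
      obtain ⟨n₁, n₂, w₁, w₂, rfl, rfl, h₁, h₂⟩ := ih h
      exact ⟨_ + n₁ + 1, n₂, _ ++ w₁, w₂, by omega, by simp, nonterminal hr ho h₁, h₂⟩

theorem terminals (w : List T) : g.ParseForest 0 (w.map .terminal) w := by
  induction w with
  | nil => exact nil
  | cons a w ih => exact ih.terminal a

theorem derives {n : ℕ} {s : List (Symbol T g.NT)} {w : List T} (h : g.ParseForest n s w) :
    g.Derives s (w.map .terminal) := by
  induction h with
  | nil => exact .refl _
  | terminal a _ ih => exact ih.append_left [.terminal a]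
  | @nonterminal m n s u w r hr _ _ iho ihs =>
    have hstep : g.Derives [.nonterminal r.input] r.output :=
      Produces.single ⟨r, hr, ContextFreeRule.Rewrites.input_output⟩
    rw [List.map_append]
    exact ((hstep.append_right s).trans (iho.append_right s)).trans (ihs.append_left _)

theorem of_produces {s t : List (Symbol T g.NT)} {n : ℕ} {w : List T} (hst : g.Produces s t)
    (h : g.ParseForest n t w) : ∃ m, g.ParseForest m s w := by
  obtain ⟨r, hr, hrw⟩ := hst
  obtain ⟨p, q, rfl, rfl⟩ := hrw.exists_parts
  obtain ⟨n₁, n₂, w₁, w₂, -, rfl, h₁, h₂⟩ := split (s₁ := p) (by simpa using h)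
  obtain ⟨m₁, m₂, u, w₃, -, rfl, ho, hq⟩ := split h₂
  exact ⟨_, by simpa using h₁.append (nonterminal hr ho hq)⟩

end ParseForest

theorem exists_parseForest_of_derives {s : List (Symbol T g.NT)} {w : List T}
    (h : g.Derives s (w.map .terminal)) : ∃ n, g.ParseForest n s w := by
  induction h using Relation.ReflTransGen.head_induction_on with
  | refl => exact ⟨0, .terminals w⟩
  | head hst _ ih => exact ih.elim fun _ h => h.of_produces hst

def DerivesContext (g : ContextFreeGrammar T) (X : g.NT) (p : List T) (Y : g.NT) (q : List T) :
    Prop :=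
  g.Derives [.nonterminal X] (p.map .terminal ++ .nonterminal Y :: q.map .terminal)

namespace DerivesContext

variable {X Y Z : g.NT} {p q p' q' : List T}

theorem refl (X : g.NT) : g.DerivesContext X [] X [] := Derives.refl _

theorem trans (h : g.DerivesContext X p Y q) (h' : g.DerivesContext Y p' Z q') :
    g.DerivesContext X (p ++ p') Z (q' ++ q) := by
  have := (h'.append_left (p.map .terminal)).append_right (q.map .terminal)
  exact Derives.trans h (by simpa using this)

theorem derives (h : g.DerivesContext X p Y q) {w : List T}
    (hw : g.Derives [.nonterminal Y] (w.map .terminal)) :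
    g.Derives [.nonterminal X] ((p ++ w ++ q).map .terminal) := by
  have := (hw.append_left (p.map .terminal)).append_right (q.map .terminal)
  exact Derives.trans h (by simpa using this)

theorem pow (h : g.DerivesContext Y p Y q) (k : ℕ) :
    g.DerivesContext Y (List.replicate k p).flatten Y (List.replicate k q).flatten := by
  induction k with
  | zero => exact refl Y
  | succ k ih =>
    rw [List.replicate_succ', List.replicate_succ, List.flatten_append, List.flatten_cons]
    simpa using ih.trans h

end DerivesContext

theorem ParseForest.derivesContext {r : ContextFreeRule T g.NT} (hr : r ∈ g.rules)
    {s₁ s₂ : List (Symbol T g.NT)} {Z : g.NT} (hout : r.output = s₁ ++ .nonterminal Z :: s₂)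
    {m₁ m₂ : ℕ} {p q : List T} (h₁ : g.ParseForest m₁ s₁ p) (h₂ : g.ParseForest m₂ s₂ q) :
    g.DerivesContext r.input p Z q := by
  have hstep : g.Derives [.nonterminal r.input] r.output :=
    Produces.single ⟨r, hr, ContextFreeRule.Rewrites.input_output⟩
  have h₁' := h₁.derives.append_right (Symbol.nonterminal Z :: s₂)
  have h₂' := h₂.derives.append_left (p.map Symbol.terminal ++ [.nonterminal Z])
  exact (hstep.trans (by simpa [hout] using h₁')).trans (by simpa using h₂')

theorem ParseForest.exists_largest_child {n : ℕ} {s : List (Symbol T g.NT)} {w : List T}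
    (h : g.ParseForest n s w) (hs : s ≠ []) :
    ∃ s₁ e s₂ p wc q m₁ mc m₂, s = s₁ ++ e :: s₂ ∧ w = p ++ wc ++ q ∧ n = m₁ + mc + m₂ ∧
      g.ParseForest m₁ s₁ p ∧ g.ParseForest mc [e] wc ∧ g.ParseForest m₂ s₂ q ∧
      w.length ≤ s.length * wc.length := by
  induction s generalizing n w with
  | nil => exact absurd rfl hs
  | cons e t ih =>
    obtain ⟨mh, k, wh, w', rfl, rfl, hh, ht⟩ := split (s₁ := [e]) h
    rcases eq_or_ne t [] with rfl | ht_ne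
    · obtain ⟨rfl, rfl⟩ := ht.eq_nil
      exact ⟨[], e, [], [], wh, [], 0, mh, 0, rfl, by simp, by simp, nil, hh, nil, by simp⟩
    obtain ⟨t₁, e', t₂, p, wc, q, m₁, mc, m₂, rfl, rfl, rfl, h₁, hc, h₂, hlen⟩ := ih ht ht_ne
    by_cases hcmp : wh.length ≤ wc.length
    · refine ⟨e :: t₁, e', t₂, wh ++ p, wc, q, mh + m₁, mc, m₂, rfl, by simp, by omega,
        by simpa using hh.append h₁, hc, h₂, ?_⟩
      simp only [List.length_append, List.length_cons] at hlen ⊢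
      nlinarith
    · refine ⟨[], e, t₁ ++ e' :: t₂, [], wh, p ++ wc ++ q, 0, mh, m₁ + mc + m₂, rfl, by simp,
        by omega, nil, hh, ht, ?_⟩
      simp only [List.length_append, List.length_cons] at hlen ⊢
      nlinarith

open Classical in
noncomputable def nonterminals (g : ContextFreeGrammar T) : Finset g.NT :=
  g.rules.image ContextFreeRule.input

def fanout (g : ContextFreeGrammar T) : ℕ :=
  max 2 (g.rules.sup fun r => r.output.length)

theorem input_mem_nonterminals {r : ContextFreeRule T g.NT} (hr : r ∈ g.rules) :
    r.input ∈ g.nonterminals := by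
  classical
  exact Finset.mem_image_of_mem _ hr

theorem length_output_le_fanout {r : ContextFreeRule T g.NT} (hr : r ∈ g.rules) :
    r.output.length ≤ g.fanout :=
  (Finset.le_sup (f := fun r => r.output.length) hr).trans (le_max_right _ _)

theorem two_le_fanout : 2 ≤ g.fanout := le_max_left _ _

theorem ParseForest.nonterminal_of_child {r : ContextFreeRule T g.NT} (hr : r ∈ g.rules)
    {s₁ s₂ : List (Symbol T g.NT)} {Z : g.NT} (hout : r.output = s₁ ++ .nonterminal Z :: s₂)
    {m₁ m₂ k : ℕ} {p q w : List T} (h₁ : g.ParseForest m₁ s₁ p) (h₂ : g.ParseForest m₂ s₂ q)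
    (h : g.ParseForest k [.nonterminal Z] w) :
    g.ParseForest (m₁ + k + m₂ + 1) [.nonterminal r.input] (p ++ w ++ q) := by
  have := nonterminal hr (hout ▸ h₁.append (h.append h₂)) nil
  simpa [Nat.add_assoc] using this

def HasSubtree (g : ContextFreeGrammar T) (n : ℕ) (X : g.NT) (w : List T) (Y : g.NT) : Prop :=
  ∃ p w' q m, w = p ++ w' ++ q ∧ m ≤ n ∧ g.ParseForest m [.nonterminal Y] w' ∧
    g.DerivesContext X p Y q

theorem ParseForest.hasSubtree_self {n : ℕ} {X : g.NT} {w : List T}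
    (h : g.ParseForest n [.nonterminal X] w) : g.HasSubtree n X w X :=
  ⟨[], w, [], n, by simp, le_rfl, h, .refl X⟩

theorem HasSubtree.lift {m n : ℕ} {X Y Z : g.NT} {p q w : List T}
    (hc : g.DerivesContext X p Z q) (hmn : m ≤ n) (h : g.HasSubtree m Z w Y) :
    g.HasSubtree n X (p ++ w ++ q) Y := by
  obtain ⟨p', w', q', k, rfl, hk, hw', hc'⟩ := h
  exact ⟨p ++ p', w', q' ++ q, k, by simp, hk.trans hmn, hw', hc.trans hc'⟩

def Pumps (g : ContextFreeGrammar T) (K : ℕ) (X : g.NT) (w : List T) : Prop :=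
  ∃ Y u v x y z, w = u ++ v ++ x ++ y ++ z ∧ (v ++ x ++ y).length ≤ K ∧ v ++ y ≠ [] ∧
    g.DerivesContext X u Y z ∧ g.DerivesContext Y v Y y ∧
    g.Derives [.nonterminal Y] (x.map .terminal)

theorem Pumps.lift {K : ℕ} {X Z : g.NT} {p q w : List T} (hc : g.DerivesContext X p Z q)
    (h : g.Pumps K Z w) : g.Pumps K X (p ++ w ++ q) := by
  obtain ⟨Y, u, v, x, y, z, rfl, hK, hvy, hu, hv, hx⟩ := h
  exact ⟨Y, p ++ u, v, x, y, z ++ q, by simp, hK, hvy, hc.trans hu, hv, hx⟩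

theorem pumps_of_hasSubtree {K m n : ℕ} {X Z : g.NT} {p q w : List T}
    (hc : g.DerivesContext X p Z q) (hsub : g.HasSubtree m Z w X) (hmn : m < n)
    (hmin : ∀ k < n, ¬ g.ParseForest k [.nonterminal X] (p ++ w ++ q))
    (hK : (p ++ w ++ q).length ≤ K) : g.Pumps K X (p ++ w ++ q) := by
  obtain ⟨p', w', q', k, rfl, hk, hw', hc'⟩ := hsub
  refine ⟨X, [], p ++ p', w', q' ++ q, [], by simp, by simpa using hK, ?_, .refl X,
    hc.trans hc', hw'.derives⟩
  intro hnil
  simp only [List.append_eq_nil_iff] at hnil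
  obtain ⟨⟨rfl, rfl⟩, rfl, rfl⟩ := hnil
  exact hmin k (by omega) (by simpa using hw')

def BoundsYield (g : ContextFreeGrammar T) (n : ℕ) (X : g.NT) (w : List T) (S : Finset g.NT) :
    Prop :=
  S ⊆ g.nonterminals ∧ w.length ≤ g.fanout ^ S.card ∧ ∀ Y ∈ S, g.HasSubtree n X w Y

theorem BoundsYield.length_le {n : ℕ} {X : g.NT} {w : List T} {S : Finset g.NT}
    (h : g.BoundsYield n X w S) : w.length ≤ g.fanout ^ g.nonterminals.card :=
  h.2.1.trans (Nat.pow_le_pow_right (by linarith [two_le_fanout (g := g)])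
    (Finset.card_le_card h.1))

theorem ParseForest.boundsYield_singleton {n : ℕ} {X : g.NT} {w : List T}
    (h : g.ParseForest n [.nonterminal X] w) (hX : X ∈ g.nonterminals)
    (hw : w.length ≤ g.fanout) : g.BoundsYield n X w {X} :=
  ⟨by simpa using hX, by simpa using hw, by simpa using h.hasSubtree_self⟩

theorem BoundsYield.insert [DecidableEq g.NT] {m n : ℕ} {X Z : g.NT} {p q w : List T}
    {S : Finset g.NT} (hS : g.BoundsYield m Z w S) (hc : g.DerivesContext X p Z q)
    (h : g.ParseForest n [.nonterminal X] (p ++ w ++ q)) (hX : X ∈ g.nonterminals) (hXS : X ∉ S)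
    (hlen : (p ++ w ++ q).length ≤ g.fanout * w.length) (hmn : m ≤ n) :
    g.BoundsYield n X (p ++ w ++ q) (insert X S) := by
  obtain ⟨hSV, hwS, hsub⟩ := hS
  refine ⟨Finset.insert_subset hX hSV, ?_, fun Y hY => ?_⟩
  · rw [Finset.card_insert_of_notMem hXS, pow_succ']
    exact hlen.trans (Nat.mul_le_mul_left _ hwS)
  · rcases Finset.mem_insert.mp hY with rfl | hY
    · exact h.hasSubtree_self
    · exact (hsub Y hY).lift hc hmn

/-- Induction up the path that always enters the child with the longest yield, along which the
yield grows by a factor at most `g.fanout` per level: either a nonterminal has already repeated,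
or the nonterminals met so far are distinct and bound the yield. Minimality of `n` makes the
context of a repetition nonempty. -/
theorem ParseForest.pumps_or_boundsYield {n : ℕ} {X : g.NT} {w : List T}
    (h : g.ParseForest n [.nonterminal X] w)
    (hmin : ∀ m < n, ¬ g.ParseForest m [.nonterminal X] w) :
    g.Pumps (g.fanout ^ (g.nonterminals.card + 1)) X w ∨ ∃ S, g.BoundsYield n X w S := by
  classical
  induction n using Nat.strong_induction_on generalizing X w with | _ n ih =>
  cases h with | @nonterminal m _ _ u _ r hr ho hnil =>
  obtain ⟨rfl, rfl⟩ := hnil.eq_nil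
  rw [List.append_nil] at hmin ⊢
  have hX := input_mem_nonterminals hr
  have hroot : g.ParseForest (m + 0 + 1) [.nonterminal r.input] u :=
    List.append_nil u ▸ nonterminal hr ho nil
  rcases eq_or_ne r.output [] with hout | hout
  · rw [hout] at ho
    obtain ⟨rfl, rfl⟩ := ho.eq_nil
    exact .inr ⟨_, hroot.boundsYield_singleton hX (by simp)⟩
  obtain ⟨s₁, e, s₂, p, wc, q, m₁, mc, m₂, hsplit, rfl, rfl, h₁, hc, h₂, hlen⟩ :=
    ho.exists_largest_child hout
  replace hlen : (p ++ wc ++ q).length ≤ g.fanout * wc.length :=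
    hlen.trans (Nat.mul_le_mul_right _ (length_output_le_fanout hr))
  cases e with
  | terminal a =>
    cases hc with | terminal _ hc =>
    obtain ⟨rfl, rfl⟩ := hc.eq_nil
    exact .inr ⟨_, hroot.boundsYield_singleton hX (by simpa using hlen)⟩
  | nonterminal Z =>
    have hctx := derivesContext hr hsplit h₁ h₂
    have hcmin : ∀ k < mc, ¬ g.ParseForest k [.nonterminal Z] wc := fun k hk hk' =>
      hmin _ (by omega) (nonterminal_of_child hr hsplit h₁ h₂ hk')
    rcases ih mc (by omega) hc hcmin with hpump | ⟨S, hS⟩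
    · exact .inl (hpump.lift hctx)
    by_cases hXS : r.input ∈ S
    · refine .inl (pumps_of_hasSubtree hctx (hS.2.2 _ hXS) (by omega) hmin ?_)
      rw [pow_succ']
      exact hlen.trans (Nat.mul_le_mul_left _ hS.length_le)
    · exact .inr ⟨_, hS.insert hctx (nonterminal_of_child hr hsplit h₁ h₂ hc) hX hXS hlen
        (by omega)⟩

end ContextFreeGrammar

open ContextFreeGrammar in
theorem Language.IsContextFree.pumping {T : Type*} {L : Language T} (hL : L.IsContextFree) :
    ∃ p, ∀ w ∈ L, p ≤ w.length → ∃ u v x y z, w = u ++ v ++ x ++ y ++ z ∧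
      (v ++ x ++ y).length ≤ p ∧ v ++ y ≠ [] ∧
      ∀ k, u ++ (List.replicate k v).flatten ++ x ++ (List.replicate k y).flatten ++ z ∈ L := by
  classical
  obtain ⟨g, rfl⟩ := hL
  refine ⟨g.fanout ^ (g.nonterminals.card + 1), fun w hw hlen => ?_⟩
  have hex := exists_parseForest_of_derives hw
  rcases (Nat.find_spec hex).pumps_or_boundsYield (fun m hm => Nat.find_min hex hm) with
    ⟨Y, u, v, x, y, z, rfl, hK, hvy, hu, hv, hx⟩ | ⟨S, hS⟩
  · refine ⟨u, v, x, y, z, rfl, hK, hvy, fun k => ?_⟩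
    simpa using hu.derives ((hv.pow k).derives hx)
  · have : g.fanout ^ g.nonterminals.card < g.fanout ^ (g.nonterminals.card + 1) :=
      Nat.pow_lt_pow_right two_le_fanout (Nat.lt_succ_self _)
    have := hS.length_le
    omega

namespace DFA

variable {T : Type*} {σ : Type} (M : DFA T σ) {N : Type}

/-- Threads a run of `M` from `q` into `F` through a sentential form: a nonterminal `X` is
replaced by `(q', X, {p})`, where `q'` and `p` are the states before and after it. -/
inductive Annotation : σ → List (Symbol T N) → List (Symbol T (σ × N × Set σ)) → Set σ → Prop
  | nil {q : σ} {F : Set σ} : q ∈ F → Annotation q [] [] F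
  | terminal {q : σ} {s s' F} (a : T) :
      Annotation (M.step q a) s s' F → Annotation q (.terminal a :: s) (.terminal a :: s') F
  | nonterminal {q p : σ} {s s' F} (X : N) :
      Annotation p s s' F → Annotation q (.nonterminal X :: s) (.nonterminal (q, X, {p}) :: s') F

open Classical in
noncomputable def annotations [Fintype σ] :
    List (Symbol T N) → σ → Set σ → Finset (List (Symbol T (σ × N × Set σ)))
  | [], q, F => if q ∈ F then {[]} else ∅
  | .terminal a :: s, q, F => (annotations s (M.step q a) F).image (.terminal a :: ·)
  | .nonterminal X :: s, q, F =>
    Finset.univ.biUnion fun p => (annotations s p F).image (.nonterminal (q, X, {p}) :: ·)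

variable {M}

theorem mem_annotations [Fintype σ] {s : List (Symbol T N)} {q : σ} {F : Set σ}
    {s' : List (Symbol T (σ × N × Set σ))} : s' ∈ M.annotations s q F ↔ M.Annotation q s s' F := by
  induction s generalizing q s' with
  | nil =>
    constructor
    · intro h
      simp only [annotations] at h
      split_ifs at h with hq
      · rw [Finset.mem_singleton.mp h]; exact .nil hq
      · simp at h
    · rintro ⟨hq⟩
      simp [annotations, hq]
  | cons e s ih =>
    cases e with
    | terminal a =>
      constructor
      · intro h
        simp only [annotations, Finset.mem_image] at h
        obtain ⟨s'', hs'', rfl⟩ := h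
        exact .terminal a (ih.mp hs'')
      · rintro (_ | ⟨_, h⟩)
        simpa [annotations] using ih.mpr h
    | nonterminal X =>
      constructor
      · intro h
        simp only [annotations, Finset.mem_biUnion, Finset.mem_image] at h
        obtain ⟨p, -, s'', hs'', rfl⟩ := h
        exact .nonterminal X (ih.mp hs'')
      · rintro (_ | _ | ⟨_, h⟩)
        simp only [annotations, Finset.mem_biUnion, Finset.mem_image]
        exact ⟨_, Finset.mem_univ _, _, ih.mpr h, rfl⟩

theorem Annotation.nonterminal_cons_inv {q : σ} {s : List (Symbol T N)}
    {x : σ × N × Set σ} {s' : List (Symbol T (σ × N × Set σ))} {F : Set σ}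
    (h : M.Annotation q s (.nonterminal x :: s') F) :
    ∃ X p s₀, s = .nonterminal X :: s₀ ∧ x = (q, X, {p}) ∧ M.Annotation p s₀ s' F := by
  cases h with
  | nonterminal X h => exact ⟨X, _, _, rfl, rfl, h⟩

end DFA

namespace ContextFreeGrammar

variable {T : Type*} {g : ContextFreeGrammar T} {σ : Type} [Fintype σ]

open Classical in
/-- The nonterminal `(q, X, F)` derives the words derived by `X` that lead `M` from `q` into `F`. -/
noncomputable def interDFA (g : ContextFreeGrammar T) (M : DFA T σ) : ContextFreeGrammar T where
  NT := σ × g.NT × Set σ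
  initial := (M.start, g.initial, M.accept)
  rules := g.rules.biUnion fun r => (Finset.univ : Finset (σ × Set σ)).biUnion fun qF =>
    (M.annotations r.output qF.1 qF.2).image fun s' => ⟨(qF.1, r.input, qF.2), s'⟩

variable {M : DFA T σ}

theorem mem_interDFA_rules {r' : ContextFreeRule T (σ × g.NT × Set σ)} :
    r' ∈ (g.interDFA M).rules ↔
      ∃ r ∈ g.rules, r'.input.2.1 = r.input ∧
        M.Annotation r'.input.1 r.output r'.output r'.input.2.2 := by
  classical
  change r' ∈ g.rules.biUnion _ ↔ _
  simp only [Finset.mem_biUnion, Finset.mem_univ, true_and, Finset.mem_image,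
    DFA.mem_annotations]
  constructor
  · rintro ⟨r, hr, ⟨q, F⟩, s', hs', rfl⟩
    exact ⟨r, hr, rfl, hs'⟩
  · rintro ⟨r, hr, hin, hann⟩
    exact ⟨r, hr, (r'.input.1, r'.input.2.2), r'.output, hann, by ext <;> simp [hin]⟩

theorem ParseForest.of_interDFA {n : ℕ} {s' : List (Symbol T (g.interDFA M).NT)} {w : List T}
    (h : (g.interDFA M).ParseForest n s' w) {q : σ} {s : List (Symbol T g.NT)} {F : Set σ}
    (hs : M.Annotation q s s' F) : M.evalFrom q w ∈ F ∧ ∃ m, g.ParseForest m s w := by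
  induction h generalizing q s F with
  | nil => cases hs with | nil hq => exact ⟨hq, 0, .nil⟩
  | terminal a _ ih =>
    cases hs with | terminal _ hs =>
    obtain ⟨hw, m, hm⟩ := ih hs
    exact ⟨hw, m, hm.terminal a⟩
  | nonterminal hr' _ _ iho ihs =>
    obtain ⟨X, p, s₀, rfl, hin, hs⟩ := hs.nonterminal_cons_inv
    obtain ⟨r, hr, hX, hout⟩ := mem_interDFA_rules.mp hr'
    rw [hin] at hX hout
    obtain ⟨hu, mo, ho⟩ := iho hout
    obtain ⟨hw, ms, hs⟩ := ihs hs
    rw [Set.mem_singleton_iff] at hu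
    refine ⟨by rwa [DFA.evalFrom_of_append, hu], mo + ms + 1, ?_⟩
    rw [show X = r.input from hX]
    exact .nonterminal hr ho hs

theorem ParseForest.to_interDFA {n : ℕ} {s : List (Symbol T g.NT)} {w : List T}
    (h : g.ParseForest n s w) {q : σ} {F : Set σ} (hw : M.evalFrom q w ∈ F) :
    ∃ s' m, M.Annotation q s s' F ∧ (g.interDFA M).ParseForest m s' w := by
  induction h generalizing q F with
  | nil => exact ⟨[], 0, .nil hw, .nil⟩
  | terminal a _ ih =>
    obtain ⟨s', m, hs', hm⟩ := ih hw
    exact ⟨_, m, .terminal a hs', hm.terminal a⟩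
  | @nonterminal _ _ _ u _ r hr _ _ iho ihs =>
    rw [DFA.evalFrom_of_append] at hw
    obtain ⟨o', mo, ho', hmo⟩ := iho (Set.mem_singleton (M.evalFrom q u))
    obtain ⟨s', ms, hs', hms⟩ := ihs hw
    have hr' : (⟨(q, r.input, {M.evalFrom q u}), o'⟩ : ContextFreeRule T (g.interDFA M).NT) ∈
        (g.interDFA M).rules := mem_interDFA_rules.mpr ⟨r, hr, rfl, ho'⟩
    exact ⟨_, _, .nonterminal r.input hs', .nonterminal hr' hmo hms⟩

theorem exists_parseForest_interDFA_iff {q : σ} {X : g.NT} {F : Set σ} {w : List T} :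
    (∃ n, (g.interDFA M).ParseForest n [.nonterminal (q, X, F)] w) ↔
      (∃ n, g.ParseForest n [.nonterminal X] w) ∧ M.evalFrom q w ∈ F := by
  constructor
  · rintro ⟨n, h⟩
    generalize hx : (q, X, F) = x at h
    cases h with | nonterminal hr' ho hnil =>
    obtain ⟨rfl, rfl⟩ := hnil.eq_nil
    obtain ⟨r, hr, hX, hout⟩ := mem_interDFA_rules.mp hr'
    rw [← hx] at hX hout
    obtain ⟨hu, m, hm⟩ := ho.of_interDFA hout
    refine ⟨⟨m + 0 + 1, ?_⟩, by simpa using hu⟩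
    rw [show X = r.input from hX]
    exact .nonterminal hr hm .nil
  · rintro ⟨⟨n, h⟩, hw⟩
    cases h with | nonterminal hr ho hnil =>
    obtain ⟨rfl, rfl⟩ := hnil.eq_nil
    obtain ⟨o', m, ho', hm⟩ := ho.to_interDFA (by simpa using hw)
    have hr' : (⟨(q, _, F), o'⟩ : ContextFreeRule T (g.interDFA M).NT) ∈ (g.interDFA M).rules :=
      mem_interDFA_rules.mpr ⟨_, hr, rfl, ho'⟩
    exact ⟨_, .nonterminal hr' hm .nil⟩

theorem language_interDFA : (g.interDFA M).language = g.language ⊓ M.accepts := by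
  ext w
  have key := exists_parseForest_interDFA_iff (M := M) (q := M.start) (X := g.initial)
    (F := M.accept) (w := w)
  constructor
  · intro h
    obtain ⟨⟨n, hn⟩, hacc⟩ := key.mp (exists_parseForest_of_derives h)
    exact ⟨hn.derives, hacc⟩
  · rintro ⟨hg, hacc⟩
    obtain ⟨n, hn⟩ := key.mpr ⟨exists_parseForest_of_derives hg, hacc⟩
    exact hn.derives

end ContextFreeGrammar

theorem Language.IsContextFree.inf_isRegular {T : Type*} {L R : Language T}
    (hL : L.IsContextFree) (hR : R.IsRegular) : (L ⊓ R).IsContextFree := by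
  obtain ⟨g, rfl⟩ := hL
  obtain ⟨σ, _, M, rfl⟩ := hR
  exact ⟨g.interDFA M, g.language_interDFA⟩

/-- The words whose walk (`false` up, `true` down) from height `h` ends at `0` without going below
it; empty for `h < 0`. -/
def dyckFrom (h : ℤ) : Set (List Bool) :=
  {v | (v.count true : ℤ) = h + v.count false ∧
    ∀ p, p <+: v → (p.count true : ℤ) ≤ h + p.count false}

theorem setOf_isDyck_eq_dyckFrom_zero : {v | IsDyck v} = dyckFrom 0 := by
  ext v
  simp only [Set.mem_ofPred_eq, IsDyck, dyckFrom, zero_add, Nat.cast_inj, Nat.cast_le, eq_comm]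

theorem nonneg_of_mem_dyckFrom {h : ℤ} {v : List Bool} (hv : v ∈ dyckFrom h) : 0 ≤ h := by
  simpa using hv.2 [] List.nil_prefix

theorem le_length_of_mem_dyckFrom {h : ℤ} {v : List Bool} (hv : v ∈ dyckFrom h) :
    h ≤ v.length := by
  have := List.count_true_add_count_false v
  have := hv.1
  omega

theorem lderiv_dyckFrom {h : ℤ} (hh : 0 ≤ h) (b : Bool) :
    lderiv b (dyckFrom h) = dyckFrom (h + if b then -1 else 1) := by
  have hstep (p : List Bool) : ((b :: p).count true : ℤ) - (b :: p).count false =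
      p.count true - p.count false - if b then -1 else 1 := by
    cases b <;> simp only [List.count_cons_self, List.count_cons_of_ne, ne_eq, Bool.false_eq_true,
      Bool.true_eq_false, not_false_eq_true, Nat.cast_add, Nat.cast_one, ↓reduceIte] <;> ring
  ext v
  change b :: v ∈ dyckFrom h ↔ _
  constructor
  · rintro ⟨hend, hpre⟩
    refine ⟨by linarith [hstep v], fun p hp => ?_⟩
    linarith [hstep p, hpre (b :: p) (List.cons_prefix_cons.mpr ⟨rfl, hp⟩)]
  · rintro ⟨hend, hpre⟩
    refine ⟨by linarith [hstep v], fun p hp => ?_⟩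
    rcases List.prefix_cons_iff.mp hp with rfl | ⟨p, rfl, hp'⟩
    · simpa using hh
    · linarith [hstep p, hpre p hp']

theorem lderiv_dyckFrom_subset (h : ℤ) (b : Bool) :
    lderiv b (dyckFrom h) ⊆ dyckFrom (h + if b then -1 else 1) := by
  by_cases hh : 0 ≤ h
  · exact (lderiv_dyckFrom hh b).le
  · exact fun v hv => absurd (nonneg_of_mem_dyckFrom hv) hh

theorem winW_mono {v : List Bool} {T T' : Set (List Bool)} (hT : T ⊆ T') (hv : winW v T) :
    winW v T' := by
  induction v generalizing T T' with
  | nil => exact hT hv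
  | cons b v ih =>
    have hl (c : Bool) : lderiv c T ⊆ lderiv c T' := fun u hu => hT hu
    cases b
    · exact hv.imp (ih (hl false)) (ih (hl true))
    · exact hv.imp (ih (hl false)) (ih (hl true))

theorem exists_mem_length_eq_of_winW {v : List Bool} {T : Set (List Bool)} (hv : winW v T) :
    ∃ u ∈ T, u.length = v.length := by
  induction v generalizing T with
  | nil => exact ⟨[], hv, rfl⟩
  | cons b v ih =>
    have hv' : ∃ c, winW v (lderiv c T) := by cases b; exacts [hv.elim (⟨_, ·⟩) (⟨_, ·⟩), ⟨_, hv.1⟩]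
    obtain ⟨c, hc⟩ := hv'
    obtain ⟨u, hu, hlen⟩ := ih hc
    exact ⟨c :: u, hu, by simp [hlen]⟩

theorem winW_dyckFrom_bounds {v : List Bool} {h : ℤ} (hv : winW v (dyckFrom h)) :
    0 ≤ h ∧ h ≤ v.length := by
  obtain ⟨u, hu, hlen⟩ := exists_mem_length_eq_of_winW hv
  exact ⟨nonneg_of_mem_dyckFrom hu, hlen ▸ le_length_of_mem_dyckFrom hu⟩

theorem exists_le_winW_of_winW_append {p s : List Bool} {h : ℤ}
    (hw : winW (p ++ s) (dyckFrom h)) : ∃ h' ≤ h + p.length, winW s (dyckFrom h') := by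
  induction p generalizing h with
  | nil => exact ⟨h, by simp, hw⟩
  | cons b p ih =>
    have hstep : ∃ h'' ≤ h + 1, winW (p ++ s) (dyckFrom h'') := by
      have := lderiv_dyckFrom_subset h
      cases b
      · rcases hw with hw | hw
        · exact ⟨_, by simp, winW_mono (this false) hw⟩
        · exact ⟨_, by simp, winW_mono (this true) hw⟩
      · exact ⟨_, by simp, winW_mono (this false) hw.1⟩
    obtain ⟨h'', hh'', hw''⟩ := hstep
    obtain ⟨h', hh', hw'⟩ := ih hw''
    exact ⟨h', by rw [List.length_cons]; push_cast; omega, hw'⟩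

theorem winW_of_winW_replicate_true_append {b : ℕ} {t : List Bool} {h : ℤ}
    (hw : winW (List.replicate b true ++ t) (dyckFrom h)) :
    winW t (dyckFrom (h + b)) ∧ winW t (dyckFrom (h - b)) := by
  induction b generalizing h with
  | zero => simpa using hw
  | succ b ih =>
    obtain ⟨hup, hdown⟩ := hw
    have hup' := (ih (winW_mono (lderiv_dyckFrom_subset h false) hup)).1
    have hdown' := (ih (winW_mono (lderiv_dyckFrom_subset h true) hdown)).2
    simp only [Bool.false_eq_true, if_false, if_true] at hup' hdown'
    push_cast
    exact ⟨by convert hup' using 2; ring, by convert hdown' using 2; ring⟩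

theorem le_of_append_replicate_true_append_mem_winningSet {p t : List Bool} {b : ℕ}
    (hw : p ++ List.replicate b true ++ t ∈ winningSet {v | IsDyck v}) :
    b ≤ p.length ∧ 2 * b ≤ t.length := by
  change winW _ _ at hw
  rw [setOf_isDyck_eq_dyckFrom_zero, List.append_assoc] at hw
  obtain ⟨h, hh, hw⟩ := exists_le_winW_of_winW_append hw
  obtain ⟨hup, hdown⟩ := winW_of_winW_replicate_true_append hw
  have := winW_dyckFrom_bounds hup
  have := winW_dyckFrom_bounds hdown
  omega

theorem winW_replicate_false_append_of_winW_add {a : ℕ} {s : List Bool} {h : ℤ} (hh : 0 ≤ h)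
    (hs : winW s (dyckFrom (h + a))) : winW (List.replicate a false ++ s) (dyckFrom h) := by
  induction a generalizing h with
  | zero => simpa using hs
  | succ a ih =>
    refine .inl ?_
    rw [lderiv_dyckFrom hh]
    simp only [Bool.false_eq_true, if_false]
    exact ih (by omega) (by convert hs using 2; push_cast; ring)

theorem winW_replicate_false_append_add_of_winW {a : ℕ} {s : List Bool} {h : ℤ} (hh : 0 ≤ h)
    (hs : winW s (dyckFrom h)) : winW (List.replicate a false ++ s) (dyckFrom (h + a)) := by
  induction a with
  | zero => simpa using hs
  | succ a ih =>
    refine .inr ?_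
    rw [lderiv_dyckFrom (by omega)]
    rw [if_pos rfl, show h + ↑(a + 1) + -1 = h + a by push_cast; ring]
    exact ih

theorem winW_replicate_true_append_of_forall {b : ℕ} {t : List Bool} {h : ℤ} (hb : b ≤ h)
    (ht : ∀ j ≤ b, winW t (dyckFrom (h - b + 2 * j))) :
    winW (List.replicate b true ++ t) (dyckFrom h) := by
  induction b generalizing h with
  | zero => simpa using ht 0 le_rfl
  | succ b ih =>
    refine ⟨?_, ?_⟩ <;> rw [lderiv_dyckFrom (by omega)] <;> simp only [Bool.false_eq_true,
      if_false, if_true]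
    · refine ih (by omega) fun j hj => ?_
      convert ht (j + 1) (by omega) using 2
      push_cast; ring
    · refine ih (by omega) fun j hj => ?_
      convert ht j (by omega) using 2
      push_cast; ring

theorem replicate_append_replicate_append_replicate_mem_winningSet (n : ℕ) :
    List.replicate n false ++ List.replicate n true ++ List.replicate (2 * n) false ∈
      winningSet {v | IsDyck v} := by
  change winW _ _
  rw [setOf_isDyck_eq_dyckFrom_zero, List.append_assoc]
  refine winW_replicate_false_append_of_winW_add le_rfl
    (winW_replicate_true_append_of_forall (by simp) ?_)
  intro j hj
  have hsplit : List.replicate (2 * n) false =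
      List.replicate (n - j) false ++ List.replicate (n + j) false ++ [] := by
    rw [List.append_nil, ← List.replicate_add]
    congr 1
    omega
  rw [hsplit, List.append_assoc]
  refine winW_replicate_false_append_of_winW_add (by omega) ?_
  have := winW_replicate_false_append_add_of_winW (a := n + j) le_rfl
    (show winW [] (dyckFrom 0) from ⟨by simp, by simp⟩)
  convert this using 2
  push_cast; omega

def threeBlocks : Language Bool :=
  {w | ∃ a b c, w = List.replicate a false ++ List.replicate b true ++ List.replicate c false}

/-- State `i < 3` means "inside the `i`-th block"; `3` is a rejecting sink. -/
def threeBlocksDFA : DFA Bool (Fin 4) where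
  step i x := if i = 3 ∨ x = decide (i = 1) then i else i + 1
  start := 0
  accept := {3}ᶜ

theorem threeBlocksDFA_evalFrom_three (w : List Bool) : threeBlocksDFA.evalFrom 3 w = 3 := by
  induction w with
  | nil => rfl
  | cons x w ih => simpa [DFA.evalFrom_cons, threeBlocksDFA] using ih

theorem threeBlocksDFA_evalFrom_replicate {i : Fin 4} {x : Bool}
    (hi : threeBlocksDFA.step i x = i) (n : ℕ) (w : List Bool) :
    threeBlocksDFA.evalFrom i (List.replicate n x ++ w) = threeBlocksDFA.evalFrom i w := by
  induction n with
  | zero => rfl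
  | succ n ih => rwa [List.replicate_succ, List.cons_append, DFA.evalFrom_cons, hi]

theorem threeBlocksDFA_evalFrom_ne_three (w : List Bool) :
    (threeBlocksDFA.evalFrom 2 w ≠ 3 → ∃ c, w = List.replicate c false) ∧
    (threeBlocksDFA.evalFrom 1 w ≠ 3 → ∃ b c, w = List.replicate b true ++ List.replicate c false) ∧
    (threeBlocksDFA.evalFrom 0 w ≠ 3 → w ∈ threeBlocks) := by
  induction w with
  | nil => exact ⟨fun _ => ⟨0, rfl⟩, fun _ => ⟨0, 0, rfl⟩, fun _ => ⟨0, 0, 0, rfl⟩⟩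
  | cons x w ih =>
    obtain ⟨ih₂, ih₁, ih₀⟩ := ih
    cases x
    · refine ⟨fun h => ?_, fun h => ?_, fun h => ?_⟩
      · obtain ⟨c, rfl⟩ := ih₂ h
        exact ⟨c + 1, rfl⟩
      · obtain ⟨c, rfl⟩ := ih₂ h
        exact ⟨0, c + 1, rfl⟩
      · obtain ⟨a, b, c, rfl⟩ := ih₀ h
        exact ⟨a + 1, b, c, rfl⟩
    · refine ⟨fun h => absurd (threeBlocksDFA_evalFrom_three w) h, fun h => ?_, fun h => ?_⟩
      · obtain ⟨b, c, rfl⟩ := ih₁ h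
        exact ⟨b + 1, c, rfl⟩
      · obtain ⟨b, c, rfl⟩ := ih₁ h
        exact ⟨0, b + 1, c, rfl⟩

theorem threeBlocksDFA_accepts : threeBlocksDFA.accepts = threeBlocks := by
  ext w
  refine ⟨(threeBlocksDFA_evalFrom_ne_three w).2.2, ?_⟩
  rintro ⟨a, b, c, rfl⟩
  have hA (i : Fin 4) (hi : i ≠ 1) (hi' : i ≠ 3) (n : ℕ) :
      threeBlocksDFA.evalFrom i (List.replicate n false) = i := by
    simpa using threeBlocksDFA_evalFrom_replicate (x := false) (by simp [threeBlocksDFA, hi, hi'])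
      n []
  change threeBlocksDFA.evalFrom 0 _ ≠ 3
  rw [List.append_assoc, threeBlocksDFA_evalFrom_replicate rfl]
  rcases b with _ | b
  · rw [List.replicate_zero, List.nil_append, hA 0 (by decide) (by decide)]
    decide
  rw [List.replicate_succ, List.cons_append, DFA.evalFrom_cons]
  change threeBlocksDFA.evalFrom 1 _ ≠ 3
  rw [threeBlocksDFA_evalFrom_replicate rfl]
  rcases c with _ | c
  · decide
  · change threeBlocksDFA.evalFrom 2 (List.replicate c false) ≠ 3
    rw [hA 2 (by decide) (by decide)]
    decide

theorem threeBlocks_isRegular : threeBlocks.IsRegular :=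
  ⟨Fin 4, inferInstance, threeBlocksDFA, threeBlocksDFA_accepts⟩

theorem le_of_replicate_prefix_replicate_append {m a b c : ℕ} (hb : 0 < b)
    (h : List.replicate m false <+:
      List.replicate a false ++ List.replicate b true ++ List.replicate c false) : m ≤ a := by
  by_contra! ham
  have := h.getElem (i := a) (by simpa using ham)
  simp [hb] at this

theorem count_bounds_of_mem_winningSet {w : List Bool} (hw : w ∈ winningSet {v | IsDyck v})
    (hb : w ∈ threeBlocks) :
    3 * w.count true ≤ w.count false ∧
      (∀ m, List.replicate m false <+: w → 2 * w.count true + m ≤ w.count false) ∧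
      (∀ m, List.replicate m false <:+ w → w.count true + m ≤ w.count false) := by
  obtain ⟨a, b, c, rfl⟩ := hb
  obtain ⟨hba, hbc⟩ := le_of_append_replicate_true_append_mem_winningSet hw
  rw [List.length_replicate] at hba hbc
  have hct : (List.replicate a false ++ List.replicate b true ++ List.replicate c false).count
      true = b := by simp [List.count_replicate]
  have hcf : (List.replicate a false ++ List.replicate b true ++ List.replicate c false).count
      false = a + c := by simp [List.count_replicate]
  rw [hct, hcf]
  refine ⟨by omega, fun m hm => ?_, fun m hm => ?_⟩ <;>
    have hlen : m ≤ a + b + c := by simpa [Nat.add_assoc] using hm.length_le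
  · rcases Nat.eq_zero_or_pos b with rfl | hb
    · omega
    · have := le_of_replicate_prefix_replicate_append hb hm
      omega
  · rcases Nat.eq_zero_or_pos b with rfl | hb
    · omega
    · have hm' := List.reverse_prefix.mpr hm
      simp only [List.reverse_append, List.reverse_replicate, ← List.append_assoc] at hm'
      have := le_of_replicate_prefix_replicate_append hb hm'
      omega

theorem count_pump {α : Type*} [BEq α] (a : α) (u v x y z : List α) (k : ℕ) :
    (u ++ (List.replicate k v).flatten ++ x ++ (List.replicate k y).flatten ++ z).count a =
      u.count a + k * v.count a + x.count a + k * y.count a + z.count a := by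
  simp only [List.count_append, List.count_flatten, List.map_replicate, List.sum_replicate,
    smul_eq_mul]

theorem exists_pump_not_mem_winningSet_inf_threeBlocks {N : ℕ} {u v x y z : List Bool}
    (hw : List.replicate N false ++ List.replicate N true ++ List.replicate (2 * N) false =
      u ++ v ++ x ++ y ++ z)
    (hlen : (v ++ x ++ y).length ≤ N) (hvy : v ++ y ≠ []) :
    ∃ k, u ++ (List.replicate k v).flatten ++ x ++ (List.replicate k y).flatten ++ z ∉
      winningSet {v | IsDyck v} ⊓ threeBlocks := by
  by_contra! hmem
  have ht : N = u.count true + v.count true + x.count true + y.count true + z.count true := by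
    simpa [List.count_replicate, Nat.add_assoc] using congrArg (List.count true) hw
  have hf : N + 2 * N =
      u.count false + v.count false + x.count false + y.count false + z.count false := by
    simpa [List.count_replicate, Nat.add_assoc] using congrArg (List.count false) hw
  have h₀ := count_bounds_of_mem_winningSet (hmem 0).1 (hmem 0).2
  have h₂ := count_bounds_of_mem_winningSet (hmem 2).1 (hmem 2).2
  simp only [count_pump] at h₀ h₂
  have hvy' : 0 < (v ++ y).length := List.length_pos_iff.mpr hvy
  have hv := List.count_true_add_count_false v
  have hy := List.count_true_add_count_false y
  have hwlen := congrArg List.length hw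
  simp only [List.length_append, List.length_replicate] at hlen hvy' hwlen
  rcases le_or_gt N u.length with hu | hu
  · have hpre : List.replicate N false <+: u :=
      List.prefix_of_prefix_length_le ⟨_, by rw [← List.append_assoc, hw]⟩
        ⟨v ++ x ++ y ++ z, by simp⟩ (by simpa using hu)
    have := h₀.2.1 N (hpre.trans (by simp))
    have := h₂.2.1 N (hpre.trans (by simp))
    omega
  · have hsuf : List.replicate (2 * N) false <:+ z :=
      List.suffix_of_suffix_length_le ⟨_, hw⟩ ⟨u ++ v ++ x ++ y, rfl⟩
        (by rw [List.length_replicate]; omega)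
    have := h₀.2.2 (2 * N) (hsuf.trans (List.suffix_append _ _))
    have := h₂.2.2 (2 * N) (hsuf.trans (List.suffix_append _ _))
    omega

/-- the winning set of the Dyck language is not context-free. -/
theorem winningSet_dyck_not_contextFree :
    ¬ Language.IsContextFree (winningSet {v : List Bool | IsDyck v} : Language Bool) := by
  intro hcf
  obtain ⟨N, hpump⟩ := (hcf.inf_isRegular threeBlocks_isRegular).pumping
  obtain ⟨u, v, x, y, z, hw, hlen, hvy, hmem⟩ := hpump _
    ⟨replicate_append_replicate_append_replicate_mem_winningSet N, N, N, 2 * N, rfl⟩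
    (by simp)
  obtain ⟨k, hk⟩ := exists_pump_not_mem_winningSet_inf_threeBlocks hw hlen hvy
  exact hk (hmem k)
end

section
/- The minimal DFA for the winning set of the language of binary words with exactly n occurrences of 1 has exactly n³/6 + n² + 11n/6 + 2 states. -/
/-!
Write `#A`, `#B` for the numbers of `false`s and `true`s of a word. Alice wins on `w` iff
`#A w ≥ n`, `#B w ≤ n` and no suffix of `w` has more `B`s than `A`s. Hence the left quotient of
the winning set by `w` is `residual a b d`, with `a = n - #A w`, `b = n - #B w` and `d` the largest
excess of `B`s over `A`s in a suffix of `w`: the words `v` without such a suffix, with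
`#A v ≥ a`, `#B v ≤ b` and `d + #B v ≤ #A v`. It is empty iff `b < 0`. Otherwise it only records
the least number `max a (d + t)` of `A`s that `v` needs when it has `t ≤ b` `B`s, which singles out
a normal form `0 ≤ d ≤ a ≤ d + b ≤ n`. There are `(n + 3).choose 3` of these, and with the empty
quotient they are the states of the minimal automaton.
-/

theorem DFA.natCard_range_leftQuotient_accepts_le {α σ : Type*} [Finite σ] (M : DFA α σ) :
    Nat.card (Set.range M.accepts.leftQuotient) ≤ Nat.card σ := by
  rw [Language.leftQuotient_accepts]
  exact (Nat.card_mono (Set.finite_range _) (Set.range_comp_subset_range _ _)).trans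
    (Finite.card_range_le _)

theorem Nat.six_mul_choose_three (n : ℕ) :
    6 * (n + 3).choose 3 = (n + 1) * (n + 2) * (n + 3) := by
  have := Nat.descFactorial_eq_factorial_mul_choose (n + 3) 3
  simp [Nat.descFactorial, Nat.factorial] at this
  linarith

namespace ExactlyOnes

def excess (v : List Bool) : ℤ := v.count true - v.count false

def maxSuffixExcess : List Bool → ℤ
  | [] => 0
  | x :: v => max (excess (x :: v)) (maxSuffixExcess v)

theorem excess_append (w v : List Bool) : excess (w ++ v) = excess w + excess v := by
  simp only [excess, List.count_append]; push_cast; ring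

theorem excess_le_maxSuffixExcess (v : List Bool) : excess v ≤ maxSuffixExcess v := by
  cases v with
  | nil => simp [excess, maxSuffixExcess]
  | cons x v => exact le_max_left _ _

theorem maxSuffixExcess_nonneg (v : List Bool) : 0 ≤ maxSuffixExcess v := by
  induction v with
  | nil => rfl
  | cons x v ih => exact ih.trans (le_max_right _ _)

theorem maxSuffixExcess_append (w v : List Bool) :
    maxSuffixExcess (w ++ v) = max (maxSuffixExcess w + excess v) (maxSuffixExcess v) := by
  induction w with
  | nil => simp [maxSuffixExcess, excess_le_maxSuffixExcess]
  | cons x w ih =>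
    rw [List.cons_append, maxSuffixExcess, ih, maxSuffixExcess, ← List.cons_append,
      excess_append, ← max_add_add_right, max_assoc]

theorem maxSuffixExcess_le_count_true (v : List Bool) : maxSuffixExcess v ≤ v.count true := by
  induction v with
  | nil => rfl
  | cons x v ih =>
    refine max_le ?_ (ih.trans ?_) <;> simp only [excess, List.count_cons] <;> omega

theorem maxSuffixExcess_replicate_true (t : ℕ) : maxSuffixExcess (List.replicate t true) = t := by
  induction t with
  | zero => rfl
  | succ t ih =>
    rw [List.replicate_succ, maxSuffixExcess, ih]
    simp [excess, List.count_replicate]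

theorem maxSuffixExcess_replicate_false (f : ℕ) :
    maxSuffixExcess (List.replicate f false) = 0 := by
  induction f with
  | zero => rfl
  | succ f ih =>
    rw [List.replicate_succ, maxSuffixExcess, ih]
    simp [excess, List.count_replicate]

def residual (a b d : ℤ) : Language Bool :=
  {v | a ≤ v.count false ∧ v.count true ≤ b ∧ maxSuffixExcess v ≤ 0 ∧ d + excess v ≤ 0}

theorem mem_residual {a b d : ℤ} {v : List Bool} : v ∈ residual a b d ↔
    a ≤ v.count false ∧ v.count true ≤ b ∧ maxSuffixExcess v ≤ 0 ∧ d + excess v ≤ 0 := Iff.rfl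

theorem lderiv_false_count_true_eq (k : ℤ) :
    lderiv false {v : List Bool | (v.count true : ℤ) = k} = {v | (v.count true : ℤ) = k} := by
  ext v; simp [lderiv]

theorem lderiv_true_count_true_eq (k : ℤ) :
    lderiv true {v : List Bool | (v.count true : ℤ) = k} = {v | (v.count true : ℤ) = k - 1} := by
  ext v; simp [lderiv]; omega

theorem winW_count_true_eq_iff (w : List Bool) (k : ℤ) :
    winW w {v | (v.count true : ℤ) = k} ↔ w ∈ residual k k 0 := by
  induction w generalizing k with
  | nil => simp [winW, mem_residual, maxSuffixExcess, excess]; omega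
  | cons x w ih =>
    have := excess_le_maxSuffixExcess w
    cases x <;> simp [winW, lderiv_false_count_true_eq, lderiv_true_count_true_eq, ih,
      mem_residual, maxSuffixExcess, excess] at this ⊢ <;> omega

theorem winningSet_count_true_eq (n : ℕ) :
    winningSet {v : List Bool | v.count true = n} = residual n n 0 := by
  ext w
  simp_rw [← Nat.cast_inj (R := ℤ)]
  exact winW_count_true_eq_iff w n

theorem leftQuotient_residual (a b d : ℤ) (w : List Bool) :
    (residual a b d).leftQuotient w = residual (a - w.count false) (b - w.count true)
      (max (maxSuffixExcess w) (d + excess w)) := by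
  ext v
  simp only [Language.mem_leftQuotient, mem_residual, List.count_append, maxSuffixExcess_append,
    excess_append]
  push_cast
  omega

theorem leftQuotient_residual_self (n : ℤ) (w : List Bool) :
    (residual n n 0).leftQuotient w =
      residual (n - w.count false) (n - w.count true) (maxSuffixExcess w) := by
  rw [leftQuotient_residual, zero_add, max_eq_left (excess_le_maxSuffixExcess w)]

theorem residual_eq_zero {a b d : ℤ} (hb : b < 0) : residual a b d = 0 := by
  ext v
  simp only [mem_residual, Language.notMem_zero, iff_false]
  omega

theorem residual_ne_zero {a b d : ℤ} (hb : 0 ≤ b) : residual a b d ≠ 0 := by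
  intro h
  have hmem : List.replicate (max a d).toNat false ∈ residual a b d := by
    simp [mem_residual, excess, List.count_replicate, maxSuffixExcess_replicate_false]
    omega
  exact Language.notMem_zero _ (h ▸ hmem)

theorem residual_eq_canonical (a b d : ℤ) :
    residual a b d = residual (max a d) b (max d (a - b)) := by
  ext v
  simp only [mem_residual, excess]
  omega

theorem replicate_append_replicate_mem_residual {a b d : ℤ} {t f : ℕ} :
    List.replicate t true ++ List.replicate f false ∈ residual a b d ↔
      a ≤ f ∧ t ≤ b ∧ t ≤ f ∧ d + t ≤ f := by
  simp [mem_residual, maxSuffixExcess_append, maxSuffixExcess_replicate_true,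
    maxSuffixExcess_replicate_false, excess, List.count_replicate]
  omega

theorem eq_of_residual_eq {a b d a' b' d' : ℤ} (hd : 0 ≤ d) (hda : d ≤ a) (hab : a ≤ d + b)
    (hd' : 0 ≤ d') (hda' : d' ≤ a') (hab' : a' ≤ d' + b')
    (h : residual a b d = residual a' b' d') : a = a' ∧ b = b' ∧ d = d' := by
  lift d to ℕ using hd
  lift a to ℕ using by omega
  lift b to ℕ using by omega
  lift d' to ℕ using hd'
  lift a' to ℕ using by omega
  lift b' to ℕ using by omega
  have mem (t f : ℕ) := congrArg (List.replicate t true ++ List.replicate f false ∈ ·) h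
  simp only [eq_iff_iff, replicate_append_replicate_mem_residual] at mem
  have := mem b (d + b)
  have := mem b' (d' + b')
  have := mem 0 a
  have := mem 0 a'
  push_cast at *
  omega

open Finset in
def orderedTriples (n : ℕ) : Finset (Σ _ : ℕ, Σ _ : ℕ, ℕ) :=
  (range (n + 1)).sigma fun z => (range (z + 1)).sigma fun y => range (y + 1)

theorem mem_orderedTriples {n z y x : ℕ} :
    ⟨z, y, x⟩ ∈ orderedTriples n ↔ x ≤ y ∧ y ≤ z ∧ z ≤ n := by
  simp only [orderedTriples, Finset.mem_sigma, Finset.mem_range]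
  omega

open Finset in
theorem card_orderedTriples (n : ℕ) : #(orderedTriples n) = (n + 3).choose 3 := by
  have inner (z : ℕ) : ∑ y ∈ range (z + 1), #(range (y + 1)) = (z + 2).choose 2 := by
    simpa using Nat.sum_range_add_choose z 1
  simp only [orderedTriples, card_sigma, inner]
  exact Nat.sum_range_add_choose n 2

-- `⟨z, y, x⟩` stands for the normal form `d = x ≤ a = y ≤ d + b = z`.
def canonicalResidual : (Σ _ : ℕ, Σ _ : ℕ, ℕ) → Language Bool
  | ⟨z, y, x⟩ => residual y (z - x) x

theorem canonicalResidual_injOn (n : ℕ) : Set.InjOn canonicalResidual (orderedTriples n) := by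
  rintro ⟨z, y, x⟩ hzyx ⟨z', y', x'⟩ hzyx' h
  rw [Finset.mem_coe, mem_orderedTriples] at hzyx hzyx'
  obtain ⟨hy, hz, hd⟩ := eq_of_residual_eq (by positivity) (by omega) (by omega)
    (by positivity) (by omega) (by omega) h
  have : z = z' := by omega
  subst this
  simp_all

theorem residual_mem_image_canonicalResidual {n : ℕ} {a b d : ℤ} (ha : a ≤ n) (hb : 0 ≤ b)
    (hd : 0 ≤ d) (hdb : d + b ≤ n) :
    residual a b d ∈ canonicalResidual '' orderedTriples n := by
  obtain ⟨x, hx⟩ := Int.eq_ofNat_of_zero_le (le_max_of_le_left hd : 0 ≤ max d (a - b))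
  obtain ⟨y, hy⟩ := Int.eq_ofNat_of_zero_le (le_max_of_le_right hd : 0 ≤ max a d)
  obtain ⟨z, hz⟩ := Int.eq_ofNat_of_zero_le (by omega : 0 ≤ max d (a - b) + b)
  refine ⟨⟨z, y, x⟩, Finset.mem_coe.2 (mem_orderedTriples.2 (by omega)), ?_⟩
  rw [canonicalResidual, residual_eq_canonical a b d, ← hx, ← hy, ← hz, add_sub_cancel_left]

theorem leftQuotient_residual_self_replicate {n z y x : ℕ} (hyz : y ≤ z) (hzn : z ≤ n) :
    (residual n n 0).leftQuotient
        (List.replicate (n - z) true ++ List.replicate (n - y) false ++ List.replicate x true) =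
      canonicalResidual ⟨z, y, x⟩ := by
  rw [leftQuotient_residual_self, canonicalResidual]
  simp only [List.count_append, List.count_replicate, maxSuffixExcess_append,
    maxSuffixExcess_replicate_true, maxSuffixExcess_replicate_false, excess]
  congr 1 <;> simp <;> omega

theorem range_leftQuotient_residual_self (n : ℕ) :
    Set.range (residual n n 0).leftQuotient =
      insert 0 (canonicalResidual '' orderedTriples n) := by
  ext L
  constructor
  · rintro ⟨w, rfl⟩
    rw [leftQuotient_residual_self]
    by_cases hb : (n : ℤ) < w.count true
    · exact Or.inl (residual_eq_zero (by omega))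
    · exact Or.inr (residual_mem_image_canonicalResidual (by omega) (by omega)
        (maxSuffixExcess_nonneg w) (by linarith [maxSuffixExcess_le_count_true w]))
  · rintro (rfl | ⟨⟨z, y, x⟩, hzyx, rfl⟩)
    · refine ⟨List.replicate (n + 1) true, ?_⟩
      rw [leftQuotient_residual_self]
      exact residual_eq_zero (by simp)
    · rw [Finset.mem_coe, mem_orderedTriples] at hzyx
      exact ⟨_, leftQuotient_residual_self_replicate hzyx.2.1 hzyx.2.2⟩

theorem ncard_range_leftQuotient_residual_self (n : ℕ) :
    (Set.range (residual n n 0).leftQuotient).ncard = (n + 3).choose 3 + 1 := by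
  have hzero : (0 : Language Bool) ∉ canonicalResidual '' orderedTriples n := by
    rintro ⟨⟨z, y, x⟩, hzyx, h⟩
    rw [Finset.mem_coe, mem_orderedTriples] at hzyx
    exact residual_ne_zero (by omega) h
  rw [range_leftQuotient_residual_self, Set.ncard_insert_of_notMem hzero,
    (canonicalResidual_injOn n).ncard_image, Set.ncard_coe_finset, card_orderedTriples]

end ExactlyOnes

open ExactlyOnes in
/-- the minimal DFA of the winning set of the language of words
with exactly `n` ones has `n³/6 + n² + 11n/6 + 2` states (stated without
division: `6 · #states = n³ + 6n² + 11n + 12`). -/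
theorem winningSet_exactly_n_ones_state_complexity (n : ℕ) :
    ∃ (σ : Type) (_ : Fintype σ) (M : DFA Bool σ),
      M.accepts = winningSet {v : List Bool | v.count true = n} ∧
      6 * Fintype.card σ = n^3 + 6*n^2 + 11*n + 12 ∧
      ∀ (σ' : Type) (_ : Fintype σ') (M' : DFA Bool σ'),
        M'.accepts = winningSet {v : List Bool | v.count true = n} →
          Fintype.card σ ≤ Fintype.card σ' := by
  rw [winningSet_count_true_eq]
  have hcard := ncard_range_leftQuotient_residual_self n
  have hfin : (Set.range (residual n n 0).leftQuotient).Finite :=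
    Set.finite_of_ncard_pos (by omega)
  have := hfin.fintype
  refine ⟨_, this, (residual n n 0).toDFA, Language.accepts_toDFA _, ?_, ?_⟩
  · rw [← Nat.card_eq_fintype_card, Nat.card_coe_set_eq, hcard, mul_add,
      Nat.six_mul_choose_three]
    ring
  · intro σ' _ M' hM'
    rw [← Nat.card_eq_fintype_card, ← Nat.card_eq_fintype_card, ← hM']
    exact M'.natCard_range_leftQuotient_accepts_le
end

section
/- In the winning set automaton of the minimal DFA for the language of words with exactly n ones (a chain 0 → 1 → ⋯ → n → n+1 with self-loops labeled 0 on states 0,…,n, transitions labeled 1 going right, state n final, and n+1 a rejecting sink), every game state G is equivalent to its interval closure: replacing each set S ∈ G by the interval {min S, …, max S} yields an equivalent game state. -/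
variable {Q : Type*}

/-- The minimal DFA for the language of binary words with exactly `n` ones:
a chain `0 → 1 → ⋯ → n → n+1` with `0`-self-loops on `0, …, n`, the
`1`-transitions going right, `n` final, and `n+1` a rejecting sink. -/
def chainM (n : ℕ) : DFA Bool (Fin (n + 2)) where
  step q b := if h : b = true ∧ (q : ℕ) < n + 1 then ⟨(q : ℕ) + 1, by omega⟩ else q
  start := ⟨0, by omega⟩
  accept := {⟨n, by omega⟩}

/-! For the chain automaton every A-successor and the B-successor of a set `S` have their
minimum and maximum determined by those of `S`, because a step moves a state by at most one
and so preserves the order of states.  Hence acceptance from `{S}` depends only on `min S` and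
`max S`, and a game state, being a union of singletons, may replace each `S` by the interval
`Icc (min S) (max S)`. -/

section WinningSetAutomaton

variable (M : DFA Bool Q)

lemma gsRun_cons (G : Set (Set Q)) (c : Bool) (w : List Bool) :
    gsRun M G (c :: w) = gsRun M (gsStep M G c) w := rfl

lemma gsStep_singleton (S : Set Q) (c : Bool) :
    gsStep M {S} c = if c then stepB M S else stepA M S := by
  simp only [gsStep, Set.mem_singleton_iff, Set.iUnion_iUnion_eq_left]

lemma mem_gsStep {G : Set (Set Q)} {c : Bool} {T : Set Q} :
    T ∈ gsStep M G c ↔ ∃ S ∈ G, T ∈ gsStep M {S} c := by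
  simp [gsStep]

lemma gsAccept_gsRun_iff_exists_singleton (w : List Bool) (G : Set (Set Q)) :
    gsAccept M (gsRun M G w) ↔ ∃ S ∈ G, gsAccept M (gsRun M {S} w) := by
  induction w generalizing G with
  | nil => simp [gsRun, gsAccept]
  | cons c w ih =>
    rw [gsRun_cons, ih]
    constructor
    · rintro ⟨T, hT, hacc⟩
      obtain ⟨S, hS, hTS⟩ := (mem_gsStep M).1 hT
      exact ⟨S, hS, by rw [gsRun_cons, ih]; exact ⟨T, hTS, hacc⟩⟩
    · rintro ⟨S, hS, hacc⟩
      rw [gsRun_cons, ih] at hacc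
      obtain ⟨T, hTS, hacc⟩ := hacc
      exact ⟨T, (mem_gsStep M).2 ⟨S, hS, hTS⟩, hacc⟩

end WinningSetAutomaton

section Chain

variable {n : ℕ}

lemma chainM_step_val (q : Fin (n + 2)) (c : Bool) :
    ((chainM n).step q c : ℕ) = if c = true ∧ (q : ℕ) < n + 1 then (q : ℕ) + 1 else q := by
  dsimp only [chainM]
  split_ifs <;> rfl

lemma le_chainM_step (q : Fin (n + 2)) (c : Bool) : q ≤ (chainM n).step q c := by
  rw [Fin.le_def, chainM_step_val]
  split_ifs <;> omega

lemma chainM_step_le_succ (q : Fin (n + 2)) (c : Bool) :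
    ((chainM n).step q c : ℕ) ≤ q + 1 := by
  rw [chainM_step_val]
  split_ifs <;> omega

lemma chainM_step_false (q : Fin (n + 2)) : (chainM n).step q false = q := by
  simp [chainM]

lemma chainM_step_le_step_true (q : Fin (n + 2)) (c : Bool) :
    (chainM n).step q c ≤ (chainM n).step q true := by
  cases c
  · rw [chainM_step_false]
    exact le_chainM_step q true
  · rfl

lemma monotone_chainM_step_choice (f : Fin (n + 2) → Bool) :
    Monotone fun q => (chainM n).step q (f q) := by
  intro q q' hq
  rcases hq.eq_or_lt with rfl | hlt
  · rfl
  · calc (chainM n).step q (f q) ≤ q' := Fin.le_def.2 ((chainM_step_le_succ q _).trans hlt)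
      _ ≤ (chainM n).step q' (f q') := le_chainM_step q' _

variable {S : Set (Fin (n + 2))} {a b : Fin (n + 2)}

lemma isLeast_chainM_stepB (ha : IsLeast S a) :
    IsLeast {p | ∃ q ∈ S, ∃ c : Bool, p = (chainM n).step q c} a := by
  refine ⟨⟨a, ha.1, false, (chainM_step_false a).symm⟩, ?_⟩
  rintro p ⟨q, hq, c, rfl⟩
  exact (ha.2 hq).trans (le_chainM_step q c)

lemma isGreatest_chainM_stepB (hb : IsGreatest S b) :
    IsGreatest {p | ∃ q ∈ S, ∃ c : Bool, p = (chainM n).step q c}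
      ((chainM n).step b true) := by
  refine ⟨⟨b, hb.1, true, rfl⟩, ?_⟩
  rintro p ⟨q, hq, c, rfl⟩
  exact (chainM_step_le_step_true q c).trans
    (monotone_chainM_step_choice (fun _ => true) (hb.2 hq))

lemma gsAccept_chainM_singleton_of_bounds {S' : Set (Fin (n + 2))} (hS : S' ⊆ Set.Icc a b)
    (ha : a ∈ S) (hb : b ∈ S) (hacc : gsAccept (chainM n) {S}) : gsAccept (chainM n) {S'} := by
  obtain ⟨_, rfl, hSF⟩ := hacc
  have haF := hSF ha
  have hbF := hSF hb
  simp only [chainM, Set.mem_singleton_iff] at haF hbF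
  subst haF hbF
  exact ⟨S', rfl, fun q hq => le_antisymm (hS hq).2 (hS hq).1⟩

lemma gsAccept_gsRun_chainM_singleton_of_bounds (w : List Bool) {S' : Set (Fin (n + 2))}
    (ha : IsLeast S a) (hb : IsGreatest S b) (ha' : IsLeast S' a) (hb' : IsGreatest S' b)
    (hacc : gsAccept (chainM n) (gsRun (chainM n) {S} w)) :
    gsAccept (chainM n) (gsRun (chainM n) {S'} w) := by
  induction w generalizing S S' a b with
  | nil =>
    exact gsAccept_chainM_singleton_of_bounds (fun q hq => ⟨ha'.2 hq, hb'.2 hq⟩) ha.1 hb.1 hacc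
  | cons c w ih =>
    rw [gsRun_cons, gsAccept_gsRun_iff_exists_singleton, gsStep_singleton] at hacc ⊢
    obtain ⟨T, hT, hacc⟩ := hacc
    cases c
    · obtain ⟨f, rfl⟩ := hT
      have hmono := monotone_chainM_step_choice f
      exact ⟨_, ⟨f, rfl⟩, ih (hmono.map_isLeast ha) (hmono.map_isGreatest hb)
        (hmono.map_isLeast ha') (hmono.map_isGreatest hb') hacc⟩
    · subst hT
      exact ⟨_, rfl, ih (isLeast_chainM_stepB ha) (isGreatest_chainM_stepB hb)
        (isLeast_chainM_stepB ha') (isGreatest_chainM_stepB hb') hacc⟩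

lemma gsAccept_gsRun_chainM_singleton_iff_Icc (w : List Bool) (ha : IsLeast S a)
    (hb : IsGreatest S b) :
    gsAccept (chainM n) (gsRun (chainM n) {S} w) ↔
      gsAccept (chainM n) (gsRun (chainM n) {Set.Icc a b} w) := by
  have hab : a ≤ b := ha.2 hb.1
  exact ⟨gsAccept_gsRun_chainM_singleton_of_bounds w ha hb (isLeast_Icc hab) (isGreatest_Icc hab),
    gsAccept_gsRun_chainM_singleton_of_bounds w (isLeast_Icc hab) (isGreatest_Icc hab) ha hb⟩

end Chain

/-- in the winning set automaton of `chainM n`, every game state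
is equivalent to its interval closure. -/
theorem gs_interval_closure (n : ℕ) (G : Set (Set (Fin (n + 2))))
    (hG : ∀ S ∈ G, S.Nonempty) :
    ∀ w : List Bool,
      gsAccept (chainM n) (gsRun (chainM n) G w) ↔
        gsAccept (chainM n) (gsRun (chainM n)
          {T | ∃ S ∈ G, ∃ a b : Fin (n + 2),
            IsLeast S a ∧ IsGreatest S b ∧ T = Set.Icc a b} w) := by
  intro w
  rw [gsAccept_gsRun_iff_exists_singleton, gsAccept_gsRun_iff_exists_singleton]
  constructor
  · rintro ⟨S, hS, hacc⟩
    have ha : IsLeast S (sInf S) := isLeast_csInf (hG S hS)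
    have hb : IsGreatest S (sSup S) :=
      ⟨(hG S hS).csSup_mem S.toFinite, fun _ hq => le_csSup S.toFinite.bddAbove hq⟩
    exact ⟨_, ⟨S, hS, _, _, ha, hb, rfl⟩,
      (gsAccept_gsRun_chainM_singleton_iff_Icc w ha hb).1 hacc⟩
  · rintro ⟨_, ⟨S, hS, a, b, ha, hb, rfl⟩, hacc⟩
    exact ⟨S, hS, (gsAccept_gsRun_chainM_singleton_iff_Icc w ha hb).2 hacc⟩
end

section
/- Let A be a 1-bounded chain DFA with n states. Then in the congruence of W(L(A)): (a) B^k A^k B^{k+1} ≡ B^{k+1} A^k B^k and (b) A^{k+1} B^k A^k ≡ A^k B^k A^{k+1} for all k ∈ ℕ, and (c) A^{n−1} ≡ A^n and B^{n−1} ≡ B^n. -/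
namespace ChainAux

/-! ### Combinatorial core -/

lemma windows (k : ℕ) (Q : ℕ → Prop)
    (hcl : ∀ m m', Q m → Q m' → m ≤ m' → m' ≤ m + (k+1) → ∀ t, m ≤ t → t ≤ m' → Q t)
    (hR : ∀ a ≤ k+1, ∃ m, a ≤ m ∧ m ≤ a + k ∧ Q m) :
    ∃ c d, c ≤ k ∧ k+1 ≤ d ∧ ∀ t, c ≤ t → t ≤ d → Q t := by
  suffices h : ∀ i ≤ k+1, ∃ c d, c ≤ k ∧ i ≤ d ∧ d ≤ i + k ∧ c ≤ d ∧
      ∀ t, c ≤ t → t ≤ d → Q t by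
    obtain ⟨c, d, hc1, hc2, _, _, hc5⟩ := h (k+1) le_rfl
    exact ⟨c, d, hc1, hc2, hc5⟩
  intro i
  induction i with
  | zero =>
    intro _
    obtain ⟨m, _, hm2, hm3⟩ := hR 0 (by omega)
    exact ⟨m, m, by omega, by omega, by omega, le_rfl, fun t h1 h2 => by
      have ht : t = m := by omega
      rwa [ht]⟩
  | succ i ih =>
    intro hi
    obtain ⟨c, d, hc, hid, hdk, hcd, hQ⟩ := ih (by omega)
    obtain ⟨m, hm1, hm2, hm3⟩ := hR (i+1) hi
    by_cases hmd : m ≤ d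
    · exact ⟨c, d, hc, by omega, by omega, hcd, hQ⟩
    · push_neg at hmd
      have hQd : Q d := hQ d hcd le_rfl
      have hmid : ∀ t, d ≤ t → t ≤ m → Q t := hcl d m hQd hm3 (by omega) (by omega)
      exact ⟨c, m, hc, by omega, by omega, by omega, fun t h1 h2 => by
        by_cases h : t ≤ d
        · exact hQ t h1 h
        · exact hmid t (by omega) h2⟩

lemma coreRL (k : ℕ) (P : ℕ → Prop)
    (hR : ∀ a ≤ k+1, ∃ b ≤ k, ∀ c ≤ k, P (a+b+c)) :
    ∀ a ≤ k, ∃ b ≤ k, ∀ c ≤ k+1, P (a+b+c) := by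
  set Q : ℕ → Prop := fun m => ∀ c ≤ k, P (m+c) with hQdef
  have hcl : ∀ m m', Q m → Q m' → m ≤ m' → m' ≤ m + (k+1) →
      ∀ t, m ≤ t → t ≤ m' → Q t := by
    intro m m' hm hm' hle hle' t ht1 ht2 c hc
    by_cases h : t + c ≤ m + k
    · have := hm (t + c - m) (by omega)
      have e : m + (t + c - m) = t + c := by omega
      rwa [e] at this
    · have := hm' (t + c - m') (by omega)
      have e : m' + (t + c - m') = t + c := by omega
      rwa [e] at this
  have hR' : ∀ a ≤ k+1, ∃ m, a ≤ m ∧ m ≤ a + k ∧ Q m := by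
    intro a ha
    obtain ⟨b, hb, h⟩ := hR a ha
    exact ⟨a + b, by omega, by omega, fun c hc => h c hc⟩
  obtain ⟨cc, dd, hcc, hdd, hI⟩ := windows k Q hcl hR'
  intro a ha
  refine ⟨max a cc - a, by omega, fun c hc => ?_⟩
  have hm1 : Q (max a cc) := hI _ (by omega) (by omega)
  have hm2 : Q (max a cc + 1) := hI _ (by omega) (by omega)
  by_cases h : c ≤ k
  · have := hm1 c h
    have e : max a cc + c = a + (max a cc - a) + c := by omega
    rwa [e] at this
  · have := hm2 k le_rfl
    have e : max a cc + 1 + k = a + (max a cc - a) + c := by omega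
    rwa [e] at this

lemma coreLR (k : ℕ) (P : ℕ → Prop)
    (hL : ∀ a ≤ k, ∃ b ≤ k, ∀ c ≤ k+1, P (a+b+c)) :
    ∀ a ≤ k+1, ∃ b ≤ k, ∀ c ≤ k, P (a+b+c) := by
  intro a ha
  by_cases h : a ≤ k
  · obtain ⟨b, hb, hp⟩ := hL a h
    exact ⟨b, hb, fun c hc => hp c (by omega)⟩
  · obtain ⟨b, hb, hp⟩ := hL k le_rfl
    refine ⟨b, hb, fun c hc => ?_⟩
    have := hp (c+1) (by omega)
    have e : k + b + (c+1) = a + b + c := by omega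
    rwa [e] at this

lemma coreLR' (k j : ℕ) (P : ℕ → Prop)
    (hL : ∀ a ≤ k, ∃ b ≤ k, ∀ c ≤ k+1, P (j+a+b+c)) :
    ∀ a ≤ k+1, ∃ b ≤ k, ∀ c ≤ k, P (j+a+b+c) := by
  have h := coreLR k (fun m => P (j+m)) (by
    intro a ha
    obtain ⟨b, hb, hc⟩ := hL a ha
    refine ⟨b, hb, fun c hcc => ?_⟩
    have := hc c hcc
    show P (j+(a+b+c))
    rwa [show j+(a+b+c) = j+a+b+c by omega])
  intro a ha
  obtain ⟨b, hb, hc⟩ := h a ha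
  refine ⟨b, hb, fun c hcc => ?_⟩
  have : P (j+(a+b+c)) := hc c hcc
  rwa [show j+(a+b+c) = j+a+b+c by omega] at this

lemma coreRL' (k j : ℕ) (P : ℕ → Prop)
    (hR : ∀ a ≤ k+1, ∃ b ≤ k, ∀ c ≤ k, P (j+a+b+c)) :
    ∀ a ≤ k, ∃ b ≤ k, ∀ c ≤ k+1, P (j+a+b+c) := by
  have h := coreRL k (fun m => P (j+m)) (by
    intro a ha
    obtain ⟨b, hb, hc⟩ := hR a ha
    refine ⟨b, hb, fun c hcc => ?_⟩
    have := hc c hcc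
    show P (j+(a+b+c))
    rwa [show j+(a+b+c) = j+a+b+c by omega])
  intro a ha
  obtain ⟨b, hb, hc⟩ := h a ha
  refine ⟨b, hb, fun c hcc => ?_⟩
  have : P (j+(a+b+c)) := hc c hcc
  rwa [show j+(a+b+c) = j+a+b+c by omega] at this

lemma coreB_LR (k j : ℕ) (P : ℕ → Prop)
    (h : ∃ a ≤ k+1, ∀ b ≤ k, ∃ c ≤ k, P (j+a+b+c)) :
    ∃ a ≤ k, ∀ b ≤ k, ∃ c ≤ k+1, P (j+a+b+c) := by
  by_contra hcon
  push_neg at hcon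
  have hc := coreLR' k j (fun m => ¬ P m) hcon
  obtain ⟨a, ha, hb⟩ := h
  obtain ⟨b, hbk, hcc⟩ := hc a ha
  obtain ⟨c, hck, hp⟩ := hb b hbk
  exact hcc c hck hp

lemma coreB_RL (k j : ℕ) (P : ℕ → Prop)
    (h : ∃ a ≤ k, ∀ b ≤ k, ∃ c ≤ k+1, P (j+a+b+c)) :
    ∃ a ≤ k+1, ∀ b ≤ k, ∃ c ≤ k, P (j+a+b+c) := by
  by_contra hcon
  push_neg at hcon
  have hc := coreRL' k j (fun m => ¬ P m) hcon
  obtain ⟨a, ha, hb⟩ := h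
  obtain ⟨b, hbk, hcc⟩ := hc a ha
  obtain ⟨c, hck, hp⟩ := hb b hbk
  exact hcc c hck hp

/-! ### Game-theoretic part -/

variable {n : ℕ} {M : DFA Bool (Fin n)}

def Acc (M : DFA Bool (Fin n)) (q : Fin n) : Set (List Bool) :=
  {w | M.evalFrom q w ∈ M.accept}

lemma lderiv_Acc (q : Fin n) (s : Bool) :
    lderiv s (Acc M q) = Acc M (M.step q s) := by
  ext w
  simp [lderiv, Acc, DFA.evalFrom]

def st (hn : 1 ≤ n) (j : ℕ) : Fin n := ⟨min j (n-1), by omega⟩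

lemma st_step_true (hn : 1 ≤ n)
    (h1 : ∀ i : Fin n, (i : ℕ) + 1 < n → ((M.step i true : Fin n) : ℕ) = (i : ℕ) + 1)
    (h2 : ∀ i : Fin n, (i : ℕ) + 1 = n → M.step i true = i)
    (j : ℕ) : M.step (st hn j) true = st hn (j+1) := by
  by_cases h : j + 1 < n
  · have hv : ((st hn j : Fin n) : ℕ) = j := by simp only [st]; omega
    apply Fin.ext
    rw [h1 (st hn j) (by rw [hv]; exact h), hv]
    simp only [st]; omega
  · have hv : ((st hn j : Fin n) : ℕ) = n - 1 := by simp only [st]; omega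
    rw [h2 (st hn j) (by omega)]
    apply Fin.ext
    rw [hv]; simp only [st]; omega

lemma st_sat (hn : 1 ≤ n) {j j' : ℕ} (h : n - 1 ≤ j) (h' : n - 1 ≤ j') :
    st hn j = st hn j' := by
  apply Fin.ext; simp only [st]; omega

def WP (hn : 1 ≤ n) (M : DFA Bool (Fin n)) (j : ℕ) (w : List Bool) : Prop :=
  winW w (Acc M (st hn j))

variable (hn : 1 ≤ n)
variable (h0 : ∀ i : Fin n, M.step i false = i)
variable (h1 : ∀ i : Fin n, (i : ℕ) + 1 < n → ((M.step i true : Fin n) : ℕ) = (i : ℕ) + 1)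
variable (h2 : ∀ i : Fin n, (i : ℕ) + 1 = n → M.step i true = i)

include h0 h1 h2

lemma WP_false (j : ℕ) (w : List Bool) :
    WP hn M j (false :: w) ↔ WP hn M j w ∨ WP hn M (j+1) w := by
  show winW w (lderiv false (Acc M (st hn j))) ∨ winW w (lderiv true (Acc M (st hn j))) ↔ _
  rw [lderiv_Acc, lderiv_Acc, h0, st_step_true hn h1 h2]
  exact Iff.rfl

lemma WP_true (j : ℕ) (w : List Bool) :
    WP hn M j (true :: w) ↔ WP hn M j w ∧ WP hn M (j+1) w := by
  show winW w (lderiv false (Acc M (st hn j))) ∧ winW w (lderiv true (Acc M (st hn j))) ↔ _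
  rw [lderiv_Acc, lderiv_Acc, h0, st_step_true hn h1 h2]
  exact Iff.rfl

lemma WP_repA : ∀ (a j : ℕ) (u : List Bool),
    WP hn M j (List.replicate a false ++ u) ↔ ∃ t ≤ a, WP hn M (j+t) u := by
  intro a
  induction a with
  | zero =>
    intro j u
    simp only [List.replicate, List.nil_append]
    constructor
    · intro h; exact ⟨0, le_rfl, h⟩
    · rintro ⟨t, ht, hw⟩
      rwa [show j + t = j by omega] at hw
  | succ a ih =>
    intro j u
    rw [List.replicate_succ, List.cons_append, WP_false hn h0 h1 h2, ih j u, ih (j+1) u]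
    constructor
    · rintro (⟨t, ht, hw⟩ | ⟨t, ht, hw⟩)
      · exact ⟨t, by omega, hw⟩
      · exact ⟨t+1, by omega, by rwa [show j+(t+1) = j+1+t by omega]⟩
    · rintro ⟨t, ht, hw⟩
      rcases Nat.eq_zero_or_pos t with h | h
      · exact Or.inl ⟨t, by omega, hw⟩
      · exact Or.inr ⟨t-1, by omega, by rwa [show j+1+(t-1) = j+t by omega]⟩

lemma WP_repB : ∀ (a j : ℕ) (u : List Bool),
    WP hn M j (List.replicate a true ++ u) ↔ ∀ t ≤ a, WP hn M (j+t) u := by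
  intro a
  induction a with
  | zero =>
    intro j u
    simp only [List.replicate, List.nil_append]
    constructor
    · intro h t ht
      rwa [show j + t = j by omega]
    · intro h; have := h 0 le_rfl; rwa [show j + 0 = j by omega] at this
  | succ a ih =>
    intro j u
    rw [List.replicate_succ, List.cons_append, WP_true hn h0 h1 h2, ih j u, ih (j+1) u]
    constructor
    · rintro ⟨hA, hB⟩ t ht
      rcases Nat.eq_zero_or_pos t with h | h
      · exact hA t (by omega)
      · have := hB (t-1) (by omega)
        rwa [show j+1+(t-1) = j+t by omega] at this
    · intro h
      refine ⟨fun t ht => h t (by omega), fun t ht => ?_⟩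
      have := h (t+1) (by omega)
      rwa [show j+(t+1) = j+1+t by omega] at this

lemma lift (v₁ v₂ : List Bool) (H : ∀ j, WP hn M j v₁ ↔ WP hn M j v₂) :
    ∀ (u : List Bool) (j), WP hn M j (u ++ v₁) ↔ WP hn M j (u ++ v₂) := by
  intro u
  induction u with
  | nil => exact H
  | cons s u ih =>
    intro j
    cases s
    · rw [List.cons_append, List.cons_append, WP_false hn h0 h1 h2,
        WP_false hn h0 h1 h2]
      exact or_congr (ih j) (ih (j+1))
    · rw [List.cons_append, List.cons_append, WP_true hn h0 h1 h2,
        WP_true hn h0 h1 h2]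
      exact and_congr (ih j) (ih (j+1))

end ChainAux

open ChainAux

/-- congruences of the winning set of a 1-bounded chain DFA
(`A` = `false`, `B` = `true`):
(a) `B^k A^k B^(k+1) ≡ B^(k+1) A^k B^k`,
(b) `A^(k+1) B^k A^k ≡ A^k B^k A^(k+1)`,
(c) `A^(n−1) ≡ A^n` and `B^(n−1) ≡ B^n`. -/
theorem chain_congruences (n : ℕ) (hn : 1 ≤ n) (M : DFA Bool (Fin n))
    (hstart : M.start = ⟨0, hn⟩)
    (h0 : ∀ i : Fin n, M.step i false = i)
    (h1 : ∀ i : Fin n, (i : ℕ) + 1 < n → ((M.step i true : Fin n) : ℕ) = (i : ℕ) + 1)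
    (h2 : ∀ i : Fin n, (i : ℕ) + 1 = n → M.step i true = i)
    (h3 : ∀ i : Fin n, (i : ℕ) + 1 = n → i ∉ M.accept) :
    (∀ (k : ℕ) (u₁ u₂ : List Bool),
      u₁ ++ (List.replicate k true ++ List.replicate k false ++
        List.replicate (k+1) true) ++ u₂ ∈ winningSet M.accepts ↔
      u₁ ++ (List.replicate (k+1) true ++ List.replicate k false ++
        List.replicate k true) ++ u₂ ∈ winningSet M.accepts) ∧
    (∀ (k : ℕ) (u₁ u₂ : List Bool),
      u₁ ++ (List.replicate (k+1) false ++ List.replicate k true ++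
        List.replicate k false) ++ u₂ ∈ winningSet M.accepts ↔
      u₁ ++ (List.replicate k false ++ List.replicate k true ++
        List.replicate (k+1) false) ++ u₂ ∈ winningSet M.accepts) ∧
    (∀ u₁ u₂ : List Bool,
      u₁ ++ List.replicate (n-1) false ++ u₂ ∈ winningSet M.accepts ↔
      u₁ ++ List.replicate n false ++ u₂ ∈ winningSet M.accepts) ∧
    (∀ u₁ u₂ : List Bool,
      u₁ ++ List.replicate (n-1) true ++ u₂ ∈ winningSet M.accepts ↔
      u₁ ++ List.replicate n true ++ u₂ ∈ winningSet M.accepts) := by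
  have hstart' : st hn 0 = M.start := by
    apply Fin.ext
    rw [hstart]
    simp [st]
  have hacc : M.accepts = ChainAux.Acc M (st hn 0) := by
    rw [hstart']
    ext w
    rw [DFA.mem_accepts]
    exact Iff.rfl
  have hmem : ∀ w, w ∈ winningSet M.accepts ↔ WP hn M 0 w := by
    intro w
    rw [hacc]
    exact Iff.rfl
  refine ⟨fun k u₁ u₂ => ?_, fun k u₁ u₂ => ?_, fun u₁ u₂ => ?_, fun u₁ u₂ => ?_⟩
  · rw [hmem, hmem]
    simp only [List.append_assoc]
    refine lift hn h0 h1 h2 _ _ (fun j => ?_) u₁ 0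
    rw [WP_repB hn h0 h1 h2, WP_repB hn h0 h1 h2]
    simp only [WP_repA hn h0 h1 h2, WP_repB hn h0 h1 h2]
    exact ⟨coreLR' k j (fun m => WP hn M m u₂), coreRL' k j (fun m => WP hn M m u₂)⟩
  · rw [hmem, hmem]
    simp only [List.append_assoc]
    refine lift hn h0 h1 h2 _ _ (fun j => ?_) u₁ 0
    rw [WP_repA hn h0 h1 h2, WP_repA hn h0 h1 h2]
    simp only [WP_repB hn h0 h1 h2, WP_repA hn h0 h1 h2]
    exact ⟨coreB_LR k j (fun m => WP hn M m u₂), coreB_RL k j (fun m => WP hn M m u₂)⟩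
  · rw [hmem, hmem]
    simp only [List.append_assoc]
    refine lift hn h0 h1 h2 _ _ (fun j => ?_) u₁ 0
    rw [WP_repA hn h0 h1 h2, WP_repA hn h0 h1 h2]
    constructor
    · rintro ⟨t, ht, hw⟩
      exact ⟨t, by omega, hw⟩
    · rintro ⟨t, ht, hw⟩
      by_cases h : t ≤ n-1
      · exact ⟨t, h, hw⟩
      · refine ⟨n-1, le_rfl, ?_⟩
        show winW u₂ (ChainAux.Acc M (st hn (j+(n-1))))
        rw [st_sat hn (by omega) (show n-1 ≤ j+t by omega)]
        exact hw
  · rw [hmem, hmem]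
    simp only [List.append_assoc]
    refine lift hn h0 h1 h2 _ _ (fun j => ?_) u₁ 0
    rw [WP_repB hn h0 h1 h2, WP_repB hn h0 h1 h2]
    constructor
    · intro h t ht
      by_cases h' : t ≤ n-1
      · exact h t h'
      · show winW u₂ (ChainAux.Acc M (st hn (j+t)))
        rw [st_sat hn (show n-1 ≤ j+t by omega) (show n-1 ≤ j+(n-1) by omega)]
        exact h (n-1) le_rfl
    · intro h t ht
      exact h t (by omega)
end
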